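/- arXiv:2112.04237 — 11 statements merged into one kernel-verified Lean document; each statement's English description precedes it below -/
import Mathlib

section
/- Let R be a 0-dimensional local (or graded) ring, ω_R its canonical module, and suppose tr(ω_R) can be generated by n elements. Then there exist R-module homomorphisms φ_1, ..., φ_n : ω_R → R with tr(ω_R) = φ_1(ω_R) + ... + φ_n(ω_R); i.e., the Teter number of R is at most μ(tr(ω_R)). -/
/-- For a 0-dimensional (finite-dimensional) local `K`-algebra `R`, the canonical module is
`ω_R = Hom_K(R,K)` with `R`-action `(a•ψ)(b) = ψ(a*b)`.  A `K`-linear map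
`f : ω_R → R` is `R`-linear precisely when it satisfies the following condition. -/
def RLinearDualMap (K R : Type*) [Field K] [CommRing R] [Algebra K R]
    (f : (R →ₗ[K] K) →ₗ[K] R) : Prop :=
  ∀ (a : R) (ψ : R →ₗ[K] K), f (ψ.comp (LinearMap.mulLeft K a)) = a * f ψ

/-- The trace of the canonical module: the ideal generated by the images of all
`R`-module homomorphisms `ω_R → R`. -/
def traceIdeal (K R : Type*) [Field K] [CommRing R] [Algebra K R] : Ideal R :=
  Ideal.span {x : R | ∃ f : (R →ₗ[K] K) →ₗ[K] R, RLinearDualMap K R f ∧ x ∈ Set.range f}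

/-! Over a local ring `R` with residue field `k`, Nakayama's lemma says that a subset of a
finitely generated module `N` generates it exactly when its image spans the `k`-vector space
`k ⊗ N`, whose dimension is at most the size of any generating set. The images `φ(ω_R)` together
generate `tr(ω_R)`, so a basis of `k ⊗ tr(ω_R)` can be chosen among their elements: at most
`μ(tr(ω_R))` elements, each taken from a single image `φ_i(ω_R)`. -/

open Submodule TensorProduct

namespace IsLocalRing

variable {R M : Type*} [CommRing R] [IsLocalRing R] [AddCommGroup M] [Module R M]

theorem span_residueField_image_mk_eq_top_iff [Module.Finite R M] (X : Set M) :
    span (ResidueField R) (TensorProduct.mk R (ResidueField R) M 1 '' X) = ⊤ ↔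
      span R X = ⊤ := by
  rw [← map_tensorProduct_mk_eq_top (N := span R X), map_span,
    ← restrictScalars_span R (ResidueField R) Ideal.Quotient.mk_surjective,
    restrictScalars_eq_top_iff]

theorem exists_finset_subset_card_le_span_eq_top {S : Set M} (hS : span R S = ⊤)
    (s : Finset M) (hs : span R (s : Set M) = ⊤) :
    ∃ t : Finset M, ↑t ⊆ S ∧ t.card ≤ s.card ∧ span R (t : Set M) = ⊤ := by
  classical
  have : Module.Finite R M := ⟨⟨s, hs⟩⟩
  set π := TensorProduct.mk R (ResidueField R) M 1
  obtain ⟨b, hbS, hb_span, hb_indep⟩ := exists_linearIndependent (ResidueField R) (π '' S)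
  rw [(span_residueField_image_mk_eq_top_iff S).mpr hS] at hb_span
  obtain ⟨b, rfl⟩ := hb_indep.setFinite.exists_finset_coe
  obtain ⟨t, htS, ht_inj, ht_image⟩ := Finset.exists_subset_injOn_image_eq_of_surjOn S b hbS
  refine ⟨t, htS, ?_, ?_⟩
  · calc t.card = b.card := by rw [← ht_image, Finset.card_image_of_injOn ht_inj]
      _ = Module.finrank (ResidueField R) (ResidueField R ⊗[R] M) := by
        rw [← finrank_span_finset_eq_card hb_indep, hb_span, finrank_top]
      _ ≤ (s.image π).card := by
        rw [← finrank_top, ← (span_residueField_image_mk_eq_top_iff _).mpr hs, ← Finset.coe_image]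
        exact finrank_span_finset_le_card _
      _ ≤ s.card := Finset.card_image_le
  · rw [← span_residueField_image_mk_eq_top_iff, ← Finset.coe_image, ht_image, hb_span]

theorem exists_finset_subset_card_le_span_eq {N : Submodule R M} {S : Set M}
    (hS : span R S = N) (s : Finset M) (hs : span R (s : Set M) = N) :
    ∃ t : Finset M, ↑t ⊆ S ∧ t.card ≤ s.card ∧ span R (t : Set M) = N := by
  classical
  subst hs
  have hS' : span R (((↑) : span R (s : Set M) → M) ⁻¹' S) = ⊤ := by
    rw [← hS]; exact span_span_coe_preimage (R := R) (s := S)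
  obtain ⟨t, htS, ht_card, ht_span⟩ :=
    exists_finset_subset_card_le_span_eq_top hS' (s.preimage (↑) Subtype.val_injective.injOn)
      (by rw [Finset.coe_preimage]; exact span_span_coe_preimage)
  refine ⟨t.map (Function.Embedding.subtype _), ?_, ?_, ?_⟩
  · simpa [Set.subset_def] using htS
  · rw [Finset.card_map]
    exact ht_card.trans ((Finset.card_preimage _ _ _).trans_le (Finset.card_filter_le _ _))
  · rw [Finset.coe_map, Function.Embedding.coe_subtype, ← coe_subtype, ← map_span, ht_span,
      map_subtype_top]

theorem exists_fin_card_span_iUnion_eq {ι : Type*} [Nonempty ι] {v : ι → Set M}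
    {N : Submodule R M} (hv : span R (⋃ a, v a) = N) (s : Finset M)
    (hs : span R (s : Set M) = N) :
    ∃ g : Fin s.card → ι, span R (⋃ i, v (g i)) = N := by
  classical
  obtain ⟨t, htS, ht_card, ht_span⟩ := exists_finset_subset_card_le_span_eq hv s hs
  have hmem : ∀ x : t, ∃ a, (x : M) ∈ v a := fun x => Set.mem_iUnion.mp (htS x.2)
  choose a ha using hmem
  refine ⟨fun i => if h : (i : ℕ) < t.card then a (t.equivFin.symm ⟨i, h⟩)
    else Classical.arbitrary ι, le_antisymm ?_ ?_⟩
  · rw [← hv]; exact span_mono (Set.iUnion_subset fun i => Set.subset_iUnion v _)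
  · rw [← ht_span, span_le]
    intro x hx
    set j := t.equivFin ⟨x, hx⟩
    refine subset_span (Set.mem_iUnion.mpr ⟨⟨j, j.2.trans_le ht_card⟩, ?_⟩)
    simpa [j] using ha ⟨x, hx⟩

end IsLocalRing

theorem traceIdeal_eq_span_iUnion (K R : Type*) [Field K] [CommRing R] [Algebra K R] :
    traceIdeal K R =
      Ideal.span (⋃ f : {f : (R →ₗ[K] K) →ₗ[K] R // RLinearDualMap K R f}, Set.range f.1) := by
  rw [traceIdeal]
  congr 1
  ext x
  simp

theorem stmt1_general (K R : Type*) [Field K] [CommRing R] [Algebra K R]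
    [IsLocalRing R]
    (n : ℕ) (s : Finset R) (hcard : s.card = n)
    (hgen : Ideal.span (s : Set R) = traceIdeal K R) :
    ∃ f : Fin n → ((R →ₗ[K] K) →ₗ[K] R),
      (∀ i, RLinearDualMap K R (f i)) ∧
      traceIdeal K R = Ideal.span (⋃ i, Set.range (f i)) := by
  subst hcard
  have : Nonempty {f : (R →ₗ[K] K) →ₗ[K] R // RLinearDualMap K R f} :=
    ⟨⟨0, fun a ψ => by simp⟩⟩
  obtain ⟨g, hg⟩ := IsLocalRing.exists_fin_card_span_iUnion_eq
    (traceIdeal_eq_span_iUnion K R).symm s hgen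
  exact ⟨fun i => (g i).1, fun i => (g i).2, hg.symm⟩

/-- If `tr(ω_R)` can be generated by `n` elements, then there are `n` homomorphisms
`φ_i : ω_R → R` with `tr(ω_R) = φ_1(ω_R) + ⋯ + φ_n(ω_R)`; i.e. the Teter number of `R`
is at most `μ(tr(ω_R))`. -/
theorem stmt1 (K R : Type*) [Field K] [CommRing R] [Algebra K R]
    [IsLocalRing R] [FiniteDimensional K R]
    (n : ℕ) (s : Finset R) (hcard : s.card = n)
    (hgen : Ideal.span (s : Set R) = traceIdeal K R) :
    ∃ f : Fin n → ((R →ₗ[K] K) →ₗ[K] R),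
      (∀ i, RLinearDualMap K R (f i)) ∧
      traceIdeal K R = Ideal.span (⋃ i, Set.range (f i)) :=
  stmt1_general K R n s hcard hgen
end

section
/- Let R be a 0-dimensional local K-algebra and I ⊆ R an ideal. Then I is a τ-ideal (there is a surjective R-module homomorphism ω_R → I) if and only if there exists an ideal J ⊆ R with J ≅ Hom_K(I, K) as R-modules. -/
namespace LinearMap

variable {K V W : Type*} [Field K] [AddCommGroup V] [Module K V] [FiniteDimensional K V]
  [AddCommGroup W] [Module K W]

noncomputable def dualTranspose (u : Module.Dual K V →ₗ[K] W) : Module.Dual K W →ₗ[K] V :=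
  (Module.evalEquiv K V).symm.toLinearMap ∘ₗ u.dualMap

variable (u : Module.Dual K V →ₗ[K] W)

@[simp]
theorem apply_dualTranspose (φ : Module.Dual K V) (χ : Module.Dual K W) :
    φ (u.dualTranspose χ) = χ (u φ) := by
  simp [dualTranspose, Module.apply_evalEquiv_symm_apply]

theorem injective_dualTranspose_iff :
    Function.Injective u.dualTranspose ↔ Function.Surjective u := by
  simp [dualTranspose, dualMap_injective_iff]

theorem surjective_dualTranspose_iff :
    Function.Surjective u.dualTranspose ↔ Function.Injective u := by
  simp [dualTranspose, dualMap_surjective_iff]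

theorem dualTranspose_dualMap_apply {s : V →ₗ[K] V} {t : W →ₗ[K] W}
    (h : ∀ φ, u (s.dualMap φ) = t (u φ)) (χ : Module.Dual K W) :
    u.dualTranspose (t.dualMap χ) = s (u.dualTranspose χ) := by
  refine Module.eval_apply_injective K (LinearMap.ext fun φ => ?_)
  simp only [Module.Dual.eval_apply, apply_dualTranspose, dualMap_apply]
  calc χ (t (u φ)) = χ (u (s.dualMap φ)) := by rw [h]
    _ = φ (s (u.dualTranspose χ)) := (apply_dualTranspose u (s.dualMap φ) χ).symm

end LinearMap

namespace Ideal

variable {K R M : Type*} [Field K] [CommRing R] [Algebra K R] [AddCommGroup M] [Module K M]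

theorem exists_range_eq_iff_exists_surjective (I : Ideal R) (σ : R → Module.End K M) :
    (∃ f : M →ₗ[K] R, (∀ a x, f (σ a x) = a * f x) ∧ Set.range f = I) ↔
      ∃ u : M →ₗ[K] I, Function.Surjective u ∧ ∀ a x, u (σ a x) = a • u x := by
  constructor
  · rintro ⟨f, hf, hrange⟩
    have hmem (x : M) : f x ∈ I := by
      rw [← SetLike.mem_coe, ← hrange]
      exact Set.mem_range_self x
    refine ⟨f.codRestrict (I.restrictScalars K) hmem, ?_, fun a x => Subtype.ext (hf a x)⟩
    · rintro ⟨y, hy⟩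
      obtain ⟨x, rfl⟩ : y ∈ Set.range f := hrange ▸ hy
      exact ⟨x, rfl⟩
  · rintro ⟨u, hu, hu_comm⟩
    refine ⟨I.subtype.restrictScalars K ∘ₗ u, fun a x => congr(($(hu_comm a x) : R)), ?_⟩
    rw [LinearMap.coe_comp, hu.range_comp]
    exact Subtype.range_coe

theorem exists_linearEquiv_iff_exists_injective (ρ : R → Module.End K M) :
    (∃ (J : Ideal R) (e : J ≃ₗ[K] M), ∀ a y, e (a • y) = ρ a (e y)) ↔
      ∃ g : M →ₗ[K] R, Function.Injective g ∧ ∀ a x, g (ρ a x) = a * g x := by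
  constructor
  · rintro ⟨J, e, he⟩
    refine ⟨J.subtype.restrictScalars K ∘ₗ e.symm.toLinearMap,
      Subtype.val_injective.comp e.symm.injective, fun a x => ?_⟩
    have : e.symm (ρ a x) = a • e.symm x := by
      rw [e.symm_apply_eq, he, e.apply_symm_apply]
    exact congr(($this : R))
  · rintro ⟨g, hg, hg_comm⟩
    have smul_mem (a : R) {y : R} (hy : y ∈ LinearMap.range g) :
        a • y ∈ LinearMap.range g := by
      obtain ⟨x, rfl⟩ := hy
      exact ⟨ρ a x, hg_comm a x⟩
    let J : Ideal R := { (LinearMap.range g).toAddSubmonoid with smul_mem' := smul_mem }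
    let e : M ≃ₗ[K] J := LinearEquiv.ofInjective g hg
    refine ⟨J, e.symm, fun a y => e.injective ?_⟩
    rw [e.apply_symm_apply]
    apply Subtype.ext
    calc (a • y : R) = a * g (e.symm y) := by
          conv_lhs => rw [← e.apply_symm_apply y]
          rfl
      _ = g (ρ a (e.symm y)) := (hg_comm a _).symm

end Ideal

theorem stmt3_general (K R : Type*) [Field K] [CommRing R] [Algebra K R]
    [FiniteDimensional K R] (I : Ideal R) :
    (∃ f : (R →ₗ[K] K) →ₗ[K] R, RLinearDualMap K R f ∧ Set.range f = (I : Set R)) ↔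
    (∃ (J : Ideal R) (e : J ≃ₗ[K] (I →ₗ[K] K)),
      ∀ (a : R) (y : J) (x : I), e (a • y) x = e y (a • x)) := by
  have h_companion := Ideal.exists_linearEquiv_iff_exists_injective
    (fun a : R => (DistribSMul.toLinearMap K I a).dualMap)
  simp only [LinearMap.ext_iff, LinearMap.dualMap_apply, DistribSMul.toLinearMap_apply]
    at h_companion
  rw [h_companion]
  refine (Ideal.exists_range_eq_iff_exists_surjective I
    fun a : R => (LinearMap.mulLeft K a).dualMap).trans ⟨?_, ?_⟩
  · rintro ⟨u, hu, hu_comm⟩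
    exact ⟨u.dualTranspose, u.injective_dualTranspose_iff.2 hu,
      fun a => u.dualTranspose_dualMap_apply (s := LinearMap.mulLeft K a) (hu_comm a)⟩
  · rintro ⟨g, hg, hg_comm⟩
    exact ⟨g.dualTranspose, g.surjective_dualTranspose_iff.2 hg,
      fun a => g.dualTranspose_dualMap_apply (s := DistribSMul.toLinearMap K I a) (hg_comm a)⟩

/-- An ideal `I` of a 0-dimensional local `K`-algebra `R` is a τ-ideal (there is a
surjective `R`-module homomorphism `ω_R → I`) iff `I` has a companion, i.e. an ideal
`J` with `J ≅ Hom_K(I,K)` as `R`-modules. -/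
theorem stmt3 (K R : Type*) [Field K] [CommRing R] [Algebra K R]
    [IsLocalRing R] [FiniteDimensional K R] (I : Ideal R) :
    (∃ f : (R →ₗ[K] K) →ₗ[K] R, RLinearDualMap K R f ∧ Set.range f = (I : Set R)) ↔
    (∃ (J : Ideal R) (e : J ≃ₗ[K] (I →ₗ[K] K)),
      ∀ (a : R) (y : J) (x : I), e (a • y) x = e y (a • x)) :=
  stmt3_general K R I
end

section
/- Let R be a 0-dimensional local K-algebra and I ⊆ R a symmetric ideal (I ≅ Hom_K(I,K) as R-modules). Then I is a τ-ideal, i.e., there exists a surjective R-module homomorphism ω_R → I. -/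
/-!
Restricting functionals from `R` to `I` gives a surjection `ω_R → Hom_K(I, K)`, since over a
field every functional on a subspace extends. Composing with the inverse of the symmetry
`I ≅ Hom_K(I, K)` yields a surjection `ω_R → I`, and the balance condition
`e (a • x) y = e x (a • y)` is exactly what makes it `R`-linear.
-/

namespace Ideal

variable {K R : Type*} [Field K] [CommRing R] [Algebra K R] {I : Ideal R}

theorem symm_eq_smul_of_balanced (e : I ≃ₗ[K] Module.Dual K I)
    (he : ∀ (a : R) (x y : I), e (a • x) y = e x (a • y))
    {a : R} {φ φ' : Module.Dual K I} (hφ' : ∀ y, φ' y = φ (a • y)) :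
    e.symm φ' = a • e.symm φ := by
  apply e.injective
  ext y
  rw [e.apply_symm_apply, he, e.apply_symm_apply, hφ']

def dualToIdeal (e : I ≃ₗ[K] Module.Dual K I) : Module.Dual K R →ₗ[K] R :=
  (I.restrictScalars K).subtype ∘ₗ e.symm.toLinearMap ∘ₗ (I.restrictScalars K).dualRestrict

theorem rLinearDualMap_dualToIdeal (e : I ≃ₗ[K] Module.Dual K I)
    (he : ∀ (a : R) (x y : I), e (a • x) y = e x (a • y)) :
    RLinearDualMap K R (dualToIdeal e) := fun _ _ =>
  congrArg Subtype.val <| symm_eq_smul_of_balanced e he fun _ => rfl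

theorem range_dualToIdeal (e : I ≃ₗ[K] Module.Dual K I) :
    Set.range (dualToIdeal e) = (I : Set R) := by
  ext x
  refine ⟨fun ⟨ψ, hψ⟩ => hψ ▸ (e.symm _).2, fun hx => ?_⟩
  obtain ⟨ψ, hψ⟩ := Subspace.dualRestrict_surjective (W := I.restrictScalars K) (e ⟨x, hx⟩)
  exact ⟨ψ, congrArg Subtype.val ((congrArg e.symm hψ).trans (e.symm_apply_apply _))⟩

end Ideal

theorem stmt4_general (K R : Type*) [Field K] [CommRing R] [Algebra K R]
    (I : Ideal R)
    (hsym : ∃ e : I ≃ₗ[K] (I →ₗ[K] K),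
      ∀ (a : R) (x y : I), e (a • x) y = e x (a • y)) :
    ∃ f : (R →ₗ[K] K) →ₗ[K] R, RLinearDualMap K R f ∧ Set.range f = (I : Set R) := by
  obtain ⟨e, he⟩ := hsym
  exact ⟨Ideal.dualToIdeal e, Ideal.rLinearDualMap_dualToIdeal e he, Ideal.range_dualToIdeal e⟩

/-- If `I` is a symmetric ideal of a 0-dimensional local `K`-algebra `R`
(i.e. `I ≅ Hom_K(I,K)` as `R`-modules), then `I` is a τ-ideal: there is a surjective
`R`-module homomorphism `ω_R → I`. -/
theorem stmt4 (K R : Type*) [Field K] [CommRing R] [Algebra K R]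
    [IsLocalRing R] [FiniteDimensional K R] (I : Ideal R)
    (hsym : ∃ e : I ≃ₗ[K] (I →ₗ[K] K),
      ∀ (a : R) (x y : I), e (a • x) y = e x (a • y)) :
    ∃ f : (R →ₗ[K] K) →ₗ[K] R, RLinearDualMap K R f ∧ Set.range f = (I : Set R) :=
  stmt4_general K R I hsym
end

section
/- Let R be a 0-dimensional local K-algebra. Then R is of Teter type (there is a surjective R-module homomorphism ω_R → tr(ω_R)) if and only if tr(ω_R) is a symmetric ideal, i.e., tr(ω_R) ≅ Hom_K(tr(ω_R), K) as R-modules. -/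
/-!
If `e : I ≅ Hom_K(I,K)` is `R`-linear, then `ω_R → Hom_K(I,K) ≅ I ⊆ R` (restriction, then
`e⁻¹`) is an `R`-linear map onto `I`.

Conversely, let `f : ω_R → R` be `R`-linear with image `tr(ω_R)`. Its `K`-dual, read through
`R ≅ Hom_K(ω_R, K)`, is an injective `R`-linear map `Hom_K(tr(ω_R), K) → R`. Precomposed with
the restriction `ω_R → Hom_K(tr(ω_R), K)` it is again a homomorphism `ω_R → R`, so its image
lies in `tr(ω_R)`; comparing dimensions, it is an isomorphism `Hom_K(tr(ω_R), K) ≅ tr(ω_R)`.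
-/

open Module

section

variable {K R : Type*} [Field K] [CommRing R] [Algebra K R]

namespace Ideal

noncomputable abbrev restrictDual (I : Ideal R) : Dual K R →ₗ[K] Dual K I :=
  (I.subtype.restrictScalars K).dualMap

theorem restrictDual_surjective (I : Ideal R) :
    Function.Surjective (I.restrictDual (K := K)) :=
  LinearMap.dualMap_surjective_of_injective Subtype.val_injective

theorem restrictDual_comp_mulLeft (I : Ideal R) (ψ : Dual K R) (a : R) :
    I.restrictDual (ψ.comp (LinearMap.mulLeft K a)) =
      (I.restrictDual ψ).comp (DistribSMul.toLinearMap K I a) := by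
  ext; simp [smul_eq_mul]

theorem exists_rLinearDualMap_range_eq (I : Ideal R) (e : I ≃ₗ[K] Dual K I)
    (he : ∀ (a : R) (x y : I), e (a • x) y = e x (a • y)) :
    ∃ f : Dual K R →ₗ[K] R, RLinearDualMap K R f ∧ Set.range f = I := by
  refine ⟨I.subtype.restrictScalars K ∘ₗ e.symm.toLinearMap ∘ₗ I.restrictDual, ?_, ?_⟩
  · intro a ψ
    have : e.symm (I.restrictDual (ψ.comp (LinearMap.mulLeft K a))) =
        a • e.symm (I.restrictDual ψ) := by
      apply e.injective
      ext y
      rw [he, e.apply_symm_apply, e.apply_symm_apply, restrictDual_comp_mulLeft]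
      rfl
    simp [this]
  · ext x
    constructor
    · rintro ⟨ψ, rfl⟩
      exact (e.symm _).2
    · intro hx
      obtain ⟨ψ, hψ⟩ := I.restrictDual_surjective (e ⟨x, hx⟩)
      exact ⟨ψ, by simp [hψ]⟩

variable [FiniteDimensional K R]

noncomputable def dualTranspose (I : Ideal R) (f : Dual K R →ₗ[K] R) (hfI : ∀ ψ, f ψ ∈ I) :
    Dual K I →ₗ[K] R :=
  (evalEquiv K R).symm.toLinearMap ∘ₗ (LinearMap.codRestrict (I.restrictScalars K) f hfI).dualMap

variable {I : Ideal R} {f : Dual K R →ₗ[K] R} (hfI : ∀ ψ, f ψ ∈ I)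

theorem apply_dualTranspose (φ : Dual K I) (ψ : Dual K R) :
    ψ (I.dualTranspose f hfI φ) = φ ⟨f ψ, hfI ψ⟩ :=
  apply_evalEquiv_symm_apply K R ψ _

theorem dualTranspose_injective (hf : Set.range f = I) :
    Function.Injective (I.dualTranspose f hfI) := by
  refine (evalEquiv K R).symm.injective.comp (LinearMap.dualMap_injective_of_surjective ?_)
  rintro ⟨x, hx⟩
  obtain ⟨ψ, rfl⟩ : x ∈ Set.range f := hf ▸ hx
  exact ⟨ψ, rfl⟩

theorem dualTranspose_comp_smul (hf : RLinearDualMap K R f) (a : R) (φ : Dual K I) :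
    I.dualTranspose f hfI (φ.comp (DistribSMul.toLinearMap K I a)) =
      a * I.dualTranspose f hfI φ := by
  refine sub_eq_zero.mp <| (forall_dual_apply_eq_zero_iff K (_ - _ : R)).mp fun ψ ↦ ?_
  have hψa := apply_dualTranspose hfI φ (ψ.comp (LinearMap.mulLeft K a))
  simp only [hf a ψ] at hψa
  rw [map_sub, sub_eq_zero, apply_dualTranspose]
  exact hψa.symm

theorem dualTranspose_mem_traceIdeal (hf : RLinearDualMap K R f) (φ : Dual K I) :
    I.dualTranspose f hfI φ ∈ traceIdeal K R := by
  obtain ⟨χ, rfl⟩ := I.restrictDual_surjective φ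
  refine subset_span ⟨I.dualTranspose f hfI ∘ₗ I.restrictDual, fun a ψ ↦ ?_, χ, rfl⟩
  simp only [LinearMap.comp_apply, restrictDual_comp_mulLeft, dualTranspose_comp_smul hfI hf]

end Ideal

theorem exists_symmetric_traceIdeal_of_range_eq [FiniteDimensional K R]
    {f : Dual K R →ₗ[K] R} (hf : RLinearDualMap K R f) (hr : Set.range f = traceIdeal K R) :
    ∃ e : traceIdeal K R ≃ₗ[K] Dual K (traceIdeal K R),
      ∀ (a : R) (x y : traceIdeal K R), e (a • x) y = e x (a • y) := by
  set T := traceIdeal K R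
  have hfT : ∀ ψ, f ψ ∈ T := fun ψ ↦ hr.subset (Set.mem_range_self ψ)
  let h : Dual K T →ₗ[K] T := LinearMap.codRestrict (T.restrictScalars K)
    (T.dualTranspose f hfT) (Ideal.dualTranspose_mem_traceIdeal hfT hf)
  have hinj : Function.Injective h :=
    (LinearMap.injective_codRestrict_iff _).mpr (Ideal.dualTranspose_injective hfT hr)
  let e := (h.linearEquivOfInjective hinj Subspace.dual_finrank_eq).symm
  refine ⟨e, fun a x y ↦ ?_⟩
  obtain ⟨φ, rfl⟩ := e.symm.surjective x
  have : a • e.symm φ = e.symm (φ.comp (DistribSMul.toLinearMap K T a)) :=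
    Subtype.ext (Ideal.dualTranspose_comp_smul hfT hf a φ).symm
  rw [this, e.apply_symm_apply, e.apply_symm_apply]
  rfl

end

theorem stmt5_general (K R : Type*) [Field K] [CommRing R] [Algebra K R]
    [FiniteDimensional K R] :
    (∃ f : (R →ₗ[K] K) →ₗ[K] R, RLinearDualMap K R f ∧
        Set.range f = (traceIdeal K R : Set R)) ↔
    (∃ e : (traceIdeal K R) ≃ₗ[K] ((traceIdeal K R) →ₗ[K] K),
      ∀ (a : R) (x y : traceIdeal K R), e (a • x) y = e x (a • y)) :=
  ⟨fun ⟨_, hf, hr⟩ ↦ exists_symmetric_traceIdeal_of_range_eq hf hr,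
    fun ⟨e, he⟩ ↦ (traceIdeal K R).exists_rLinearDualMap_range_eq e he⟩

/-- A 0-dimensional local `K`-algebra `R` is of Teter type (some `R`-homomorphism
`ω_R → R` has image exactly `tr(ω_R)`) iff the ideal `tr(ω_R)` is symmetric, i.e.
`tr(ω_R) ≅ Hom_K(tr(ω_R),K)` as `R`-modules. -/
theorem stmt5 (K R : Type*) [Field K] [CommRing R] [Algebra K R]
    [IsLocalRing R] [FiniteDimensional K R] :
    (∃ f : (R →ₗ[K] K) →ₗ[K] R, RLinearDualMap K R f ∧
        Set.range f = (traceIdeal K R : Set R)) ↔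
    (∃ e : (traceIdeal K R) ≃ₗ[K] ((traceIdeal K R) →ₗ[K] K),
      ∀ (a : R) (x y : traceIdeal K R), e (a • x) y = e x (a • y)) :=
  stmt5_general K R
end

section
/- Let R be a 0-dimensional monomial K-algebra with divisor poset P. If poset ideals I and J of P are companions (i.e., there is a multigraded isomorphism J* → I), then the poset ideal I ∪ J is symmetric. -/
/-- Monomials are identified with their exponent vectors in `Fin n → ℕ`
(multiplication of monomials = addition of exponent vectors).  A divisor poset (the set of
monomials outside a 0-dimensional monomial ideal, ordered by reverse divisibility) is a
finite set of exponent vectors closed under taking divisors. -/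
def IsDivisorPoset {n : ℕ} (P : Set (Fin n → ℕ)) : Prop :=
  P.Finite ∧ ∀ u ∈ P, ∀ v : Fin n → ℕ, v ≤ u → v ∈ P

/-- A poset ideal of the divisor poset `P` (downward closed for the order
`u ⪯ v ↔ v ∣ u`, i.e. upward closed for the pointwise order on exponents). -/
def IsPosetIdealOf {n : ℕ} (P I : Set (Fin n → ℕ)) : Prop :=
  I ⊆ P ∧ ∀ u ∈ I, ∀ v ∈ P, u ≤ v → v ∈ I

/-- `J` is a companion of `I`: there is a multigraded isomorphism `J* → I`, i.e. a bijection
`f : J → I` such that the monomial `f v · v` (the sum of exponent vectors) is a constant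
monomial `m`. -/
def AreCompanions {n : ℕ} (I J : Set (Fin n → ℕ)) : Prop :=
  ∃ (m : Fin n → ℕ) (f : (Fin n → ℕ) → (Fin n → ℕ)),
    Set.BijOn f J I ∧ ∀ v ∈ J, f v + v = m

/-- `I` is symmetric if `I` is a companion of itself. -/
def IsSymmetricIdeal {n : ℕ} (I : Set (Fin n → ℕ)) : Prop := AreCompanions I I

/-- `Gen(I)`: the maximal elements of `I` in the order `⪯` (reverse divisibility), i.e. the
minimal exponent vectors: the minimal monomial generators. -/
def genSet {n : ℕ} (I : Set (Fin n → ℕ)) : Set (Fin n → ℕ) :=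
  {u ∈ I | ∀ v ∈ I, v ≤ u → v = u}

/-- `Soc(I)`: the minimal elements of `I` in the order `⪯`, i.e. the maximal exponent
vectors: the socle monomials. -/
def socSet {n : ℕ} (I : Set (Fin n → ℕ)) : Set (Fin n → ℕ) :=
  {u ∈ I | ∀ v ∈ I, u ≤ v → v = u}

/-!
If `f : J → I` is a bijection with `f v + v = m`, then every element of `I ∪ J` divides `m`,
and complementation `v ↦ m - v` sends `J` onto `I` (as `f`) and `I` back onto `J` (as `f⁻¹`).
Being an involution of `I ∪ J`, it is a multigraded self-duality of `I ∪ J` with the same `m`.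
-/

section CompanionMaps

variable {α : Type*} [AddCommMonoid α] [PartialOrder α] {I J : Set α} {f : α → α} {m : α}

theorem le_of_mem_union_of_add_eq [CanonicallyOrderedAdd α] (hsurj : Set.SurjOn f J I)
    (hm : ∀ v ∈ J, f v + v = m) : ∀ v ∈ I ∪ J, v ≤ m := by
  rintro v (hv | hv)
  · obtain ⟨w, hw, rfl⟩ := hsurj hv
    exact hm w hw ▸ le_self_add
  · exact hm v hv ▸ le_add_self

theorem mapsTo_tsub_union_of_add_eq [Sub α] [OrderedSub α] [AddLeftReflectLE α]
    (hf : Set.BijOn f J I) (hm : ∀ v ∈ J, f v + v = m) :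
    Set.MapsTo (m - ·) (I ∪ J) (I ∪ J) := by
  rintro v (hv | hv)
  · obtain ⟨w, hw, rfl⟩ := hf.surjOn hv
    simpa only [← hm w hw, add_tsub_cancel_left] using Set.mem_union_right I hw
  · simpa only [← hm v hv, add_tsub_cancel_right] using Set.mem_union_left J (hf.mapsTo hv)

theorem bijOn_tsub_of_mapsTo [CanonicallyOrderedAdd α] [Sub α] [OrderedSub α]
    [AddLeftReflectLE α] {s : Set α} (hle : ∀ v ∈ s, v ≤ m)
    (hmaps : Set.MapsTo (m - ·) s s) : Set.BijOn (m - ·) s s :=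
  have hinv : Set.InvOn (m - ·) (m - ·) s s :=
    ⟨fun v hv ↦ tsub_tsub_cancel_of_le (hle v hv), fun v hv ↦ tsub_tsub_cancel_of_le (hle v hv)⟩
  hinv.bijOn hmaps hmaps

end CompanionMaps

theorem isSymmetricIdeal_of_mapsTo_tsub {n : ℕ} {s : Set (Fin n → ℕ)} {m : Fin n → ℕ}
    (hle : ∀ v ∈ s, v ≤ m) (hmaps : Set.MapsTo (m - ·) s s) : IsSymmetricIdeal s :=
  ⟨m, (m - ·), bijOn_tsub_of_mapsTo hle hmaps, fun v hv ↦ tsub_add_cancel_of_le (hle v hv)⟩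

theorem stmt6_general {n : ℕ} (I J : Set (Fin n → ℕ))
    (hcomp : AreCompanions I J) :
    IsSymmetricIdeal (I ∪ J) := by
  obtain ⟨m, f, hf, hm⟩ := hcomp
  exact isSymmetricIdeal_of_mapsTo_tsub (le_of_mem_union_of_add_eq hf.surjOn hm)
    (mapsTo_tsub_union_of_add_eq hf hm)

/-- If poset ideals `I` and `J` of the divisor poset `P` of a 0-dimensional monomial
`K`-algebra are companions, then the poset ideal `I ∪ J` is symmetric. -/
theorem stmt6 {n : ℕ} (P I J : Set (Fin n → ℕ)) (hP : IsDivisorPoset P)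
    (hI : IsPosetIdealOf P I) (hJ : IsPosetIdealOf P J)
    (hcomp : AreCompanions I J) :
    IsSymmetricIdeal (I ∪ J) :=
  stmt6_general I J hcomp
end

section
/- Let P be the divisor poset of a 0-dimensional monomial K-algebra, and let I and J be poset ideals of P with Gen(I) = {a_1,...,a_k}, Soc(I) = {b_1,...,b_l}, Gen(J) = {c_1,...,c_{l'}}, Soc(J) = {d_1,...,d_{k'}}. Then I and J are companions if and only if k = k', l = l', and after relabelling the elements of Gen(J) and Soc(J), there is a single monomial m with a_i·d_i = m for all 1 ≤ i ≤ k and b_j·c_j = m for all 1 ≤ j ≤ l. -/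
/-!
Proof idea: if `f v + v = m` then `f v = m - v`, so `I` and `J` are companions exactly when
`v ↦ m - v` exchanges them inside the box `{v | v ≤ m}`. This map is an order-reversing
involution of the box, hence exchanges minimal and maximal elements: it pairs `Gen(I)` with
`Soc(J)` and `Soc(I)` with `Gen(J)`. Conversely, given such pairings, every `v ∈ J` lies below
some `w ∈ Soc(J)`, so `v ≤ m` and `m - v ≥ m - w ∈ Gen(I)`, and above some `c ∈ Gen(J)`, so
`m - v ≤ m - c ∈ Soc(I) ⊆ P`; since `I` is a poset ideal of `P`, `m - v ∈ I`.
-/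

section

variable {n : ℕ}

lemma mem_genSet_iff_minimal {S : Set (Fin n → ℕ)} {u : Fin n → ℕ} :
    u ∈ genSet S ↔ Minimal (· ∈ S) u :=
  ⟨fun h => ⟨h.1, fun _ hv hvu => (h.2 _ hv hvu).ge⟩,
    fun h => ⟨h.1, fun _ hv hvu => le_antisymm hvu (h.2 hv hvu)⟩⟩

lemma mem_socSet_iff_maximal {S : Set (Fin n → ℕ)} {u : Fin n → ℕ} :
    u ∈ socSet S ↔ Maximal (· ∈ S) u :=
  ⟨fun h => ⟨h.1, fun _ hv huv => (h.2 _ hv huv).le⟩,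
    fun h => ⟨h.1, fun _ hv huv => le_antisymm (h.2 hv huv) huv⟩⟩

lemma Set.Finite.exists_mem_genSet_le {S : Set (Fin n → ℕ)} (hS : S.Finite)
    {u : Fin n → ℕ} (hu : u ∈ S) : ∃ w ∈ genSet S, w ≤ u := by
  obtain ⟨w, hwu, hw⟩ := hS.exists_le_minimal hu
  exact ⟨w, mem_genSet_iff_minimal.2 hw, hwu⟩

lemma Set.Finite.exists_mem_socSet_ge {S : Set (Fin n → ℕ)} (hS : S.Finite)
    {u : Fin n → ℕ} (hu : u ∈ S) : ∃ w ∈ socSet S, u ≤ w := by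
  obtain ⟨w, huw, hw⟩ := hS.exists_le_maximal hu
  exact ⟨w, mem_socSet_iff_maximal.2 hw, huw⟩

def ComplementaryBelow (m : Fin n → ℕ) (I J : Set (Fin n → ℕ)) : Prop :=
  (∀ v ∈ J, v ≤ m ∧ m - v ∈ I) ∧ ∀ u ∈ I, u ≤ m ∧ m - u ∈ J

namespace ComplementaryBelow

variable {m : Fin n → ℕ} {I J : Set (Fin n → ℕ)}

lemma symm (h : ComplementaryBelow m I J) : ComplementaryBelow m J I := ⟨h.2, h.1⟩

lemma invOn (h : ComplementaryBelow m I J) : Set.InvOn (m - ·) (m - ·) I J :=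
  ⟨fun u hu => tsub_tsub_cancel_of_le (h.2 u hu).1,
    fun v hv => tsub_tsub_cancel_of_le (h.1 v hv).1⟩

lemma tsub_mem_socSet (h : ComplementaryBelow m I J) {u : Fin n → ℕ} (hu : u ∈ genSet I) :
    m - u ∈ socSet J := by
  refine ⟨(h.2 u hu.1).2, fun w hw huw => ?_⟩
  have hwu : m - w = u := hu.2 _ (h.1 w hw).2 (tsub_le_iff_tsub_le.1 huw)
  rw [← hwu, tsub_tsub_cancel_of_le (h.1 w hw).1]

lemma tsub_mem_genSet (h : ComplementaryBelow m I J) {u : Fin n → ℕ} (hu : u ∈ socSet I) :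
    m - u ∈ genSet J := by
  refine ⟨(h.2 u hu.1).2, fun w hw hwu => ?_⟩
  have huw : u ≤ m - w := (le_tsub_iff_le_tsub (h.1 w hw).1 (h.2 u hu.1).1).1 hwu
  rw [← hu.2 _ (h.1 w hw).2 huw, tsub_tsub_cancel_of_le (h.1 w hw).1]

lemma bijOn_genSet_socSet (h : ComplementaryBelow m I J) :
    Set.BijOn (m - ·) (genSet I) (socSet J) :=
  (h.invOn.mono (fun _ hu => hu.1) (fun _ hv => hv.1)).bijOn
    (fun _ => h.tsub_mem_socSet) (fun _ => h.symm.tsub_mem_genSet)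

lemma bijOn_socSet_genSet (h : ComplementaryBelow m I J) :
    Set.BijOn (m - ·) (socSet I) (genSet J) :=
  (h.invOn.mono (fun _ hu => hu.1) (fun _ hv => hv.1)).bijOn
    (fun _ => h.tsub_mem_genSet) (fun _ => h.symm.tsub_mem_socSet)

end ComplementaryBelow

lemma areCompanions_iff_exists_complementaryBelow {I J : Set (Fin n → ℕ)} :
    AreCompanions I J ↔ ∃ m, ComplementaryBelow m I J := by
  constructor
  · rintro ⟨m, f, hf, hfm⟩
    have hf_eq : ∀ v ∈ J, f v = m - v := fun v hv => eq_tsub_of_add_eq (hfm v hv)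
    refine ⟨m, fun v hv => ⟨hfm v hv ▸ le_add_self, hf_eq v hv ▸ hf.mapsTo hv⟩, ?_⟩
    intro u hu
    obtain ⟨v, hv, rfl⟩ := hf.surjOn hu
    refine ⟨hfm v hv ▸ le_self_add, ?_⟩
    rwa [← hfm v hv, add_tsub_cancel_left]
  · rintro ⟨m, h⟩
    exact ⟨m, (m - ·), h.symm.invOn.bijOn (fun v hv => (h.1 v hv).2) (fun u hu => (h.2 u hu).2),
      fun v hv => tsub_add_cancel_of_le (h.1 v hv).1⟩

lemma le_and_tsub_mem_of_pairings {P I J : Set (Fin n → ℕ)} {m : Fin n → ℕ}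
    (hP : IsDivisorPoset P) (hI : IsPosetIdealOf P I) (hJP : J ⊆ P)
    (hsoc : ∀ w ∈ socSet J, ∃ u ∈ genSet I, u + w = m)
    (hgen : ∀ c ∈ genSet J, ∃ b ∈ socSet I, b + c = m) :
    ∀ v ∈ J, v ≤ m ∧ m - v ∈ I := by
  intro v hv
  obtain ⟨w, hw, hvw⟩ := (hP.1.subset hJP).exists_mem_socSet_ge hv
  obtain ⟨u, hu, huw⟩ := hsoc w hw
  obtain ⟨c, hc, hcv⟩ := (hP.1.subset hJP).exists_mem_genSet_le hv
  obtain ⟨b, hb, hbc⟩ := hgen c hc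
  have hmv_le_b : m - v ≤ b := (tsub_le_tsub_left hcv m).trans_eq (eq_tsub_of_add_eq hbc).symm
  have hu_le_mv : u ≤ m - v := (eq_tsub_of_add_eq huw).trans_le (tsub_le_tsub_left hvw m)
  exact ⟨hvw.trans (huw ▸ le_add_self),
    hI.2 u hu.1 _ (hP.2 b (hI.1 hb.1) _ hmv_le_b) hu_le_mv⟩

lemma complementaryBelow_iff_pairings {P I J : Set (Fin n → ℕ)} {m : Fin n → ℕ}
    (hP : IsDivisorPoset P) (hI : IsPosetIdealOf P I) (hJ : IsPosetIdealOf P J) :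
    ComplementaryBelow m I J ↔
      (∃ g : (Fin n → ℕ) → (Fin n → ℕ),
        Set.BijOn g (genSet I) (socSet J) ∧ ∀ u ∈ genSet I, u + g u = m) ∧
      (∃ h : (Fin n → ℕ) → (Fin n → ℕ),
        Set.BijOn h (socSet I) (genSet J) ∧ ∀ u ∈ socSet I, u + h u = m) := by
  constructor
  · intro h
    exact ⟨⟨_, h.bijOn_genSet_socSet, fun u hu => add_tsub_cancel_of_le (h.2 u hu.1).1⟩,
      ⟨_, h.bijOn_socSet_genSet, fun u hu => add_tsub_cancel_of_le (h.2 u hu.1).1⟩⟩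
  · rintro ⟨⟨g, hg, hgm⟩, ⟨h, hh, hhm⟩⟩
    refine ⟨le_and_tsub_mem_of_pairings hP hI hJ.1 ?_ ?_,
      le_and_tsub_mem_of_pairings hP hJ hI.1 ?_ ?_⟩
    · intro w hw
      obtain ⟨u, hu, rfl⟩ := hg.surjOn hw
      exact ⟨u, hu, hgm u hu⟩
    · intro c hc
      obtain ⟨b, hb, rfl⟩ := hh.surjOn hc
      exact ⟨b, hb, hhm b hb⟩
    · exact fun b hb => ⟨h b, hh.mapsTo hb, (add_comm (h b) b).trans (hhm b hb)⟩
    · exact fun u hu => ⟨g u, hg.mapsTo hu, (add_comm (g u) u).trans (hgm u hu)⟩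

end

/-- Poset ideals `I` and `J` of a divisor poset `P` are companions iff (after relabelling)
there is a single monomial `m` with `a·d = m` for a bijective pairing of `Gen(I)` with
`Soc(J)` and `b·c = m` for a bijective pairing of `Soc(I)` with `Gen(J)`. -/
theorem stmt7 {n : ℕ} (P I J : Set (Fin n → ℕ)) (hP : IsDivisorPoset P)
    (hI : IsPosetIdealOf P I) (hJ : IsPosetIdealOf P J) :
    AreCompanions I J ↔
      ∃ m : Fin n → ℕ,
        (∃ g : (Fin n → ℕ) → (Fin n → ℕ),
          Set.BijOn g (genSet I) (socSet J) ∧ ∀ u ∈ genSet I, u + g u = m) ∧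
        (∃ h : (Fin n → ℕ) → (Fin n → ℕ),
          Set.BijOn h (socSet I) (genSet J) ∧ ∀ u ∈ socSet I, u + h u = m) := by
  rw [areCompanions_iff_exists_complementaryBelow]
  exact exists_congr fun _ => complementaryBelow_iff_pairings hP hI hJ
end

section
/- Let P be the divisor poset of a 0-dimensional monomial K-algebra and I a poset ideal of P with Gen(I) = {a_1,...,a_k} and Soc(I) = {b_1,...,b_l}. Then I is symmetric if and only if k = l and after relabelling of Soc(I), a_i·b_i = a_j·b_j for all 1 ≤ i, j ≤ k. -/
/-!
A symmetry `φ` of `I` with `φ v + v = m` reverses the order on `I`, so it carries the minimal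
exponent vectors (generators) bijectively onto the maximal ones (socle), still with sums `m`.
Conversely, given such a pairing, every `v ∈ I` lies below a socle element and above a
generator, hence `v ≤ m` and `m - v` is again in `I`; the reflection `v ↦ m - v` is then an
involution of `I` exhibiting its symmetry.
-/

open Set

theorem le_iff_le_of_add_eq {α : Type*} [AddCommMonoid α] [PartialOrder α]
    [IsOrderedCancelAddMonoid α] {a b u w m : α} (hu : a + u = m) (hw : b + w = m) :
    a ≤ b ↔ w ≤ u := by
  calc a ≤ b ↔ a + u + w ≤ b + w + u := by
        rw [add_assoc, add_assoc, add_comm w u, add_le_add_iff_right]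
    _ ↔ w ≤ u := by rw [hu, hw, add_le_add_iff_left]

theorem Set.BijOn.bijOn_minimal_maximal {α β : Type*} [Preorder α] [Preorder β] {f : α → β}
    {s : Set α} {t : Set β} (hf : BijOn f s t)
    (hrev : ∀ ⦃x y⦄, x ∈ s → y ∈ s → (f x ≤ f y ↔ y ≤ x)) :
    BijOn f {x | Minimal (· ∈ s) x} {x | Maximal (· ∈ t) x} := by
  have h : BijOn f {x | Minimal (· ∈ s) x} (f '' {x | Minimal (· ∈ s) x}) :=
    (hf.injOn.mono fun _ hx => Minimal.prop hx).bijOn_image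
  rw [image_antitone_setOfPred_minimal hrev] at h
  rwa [← hf.image_eq]

section DivisorPoset

variable {n : ℕ}

theorem genSet_eq_setOf_minimal (I : Set (Fin n → ℕ)) :
    genSet I = {x | Minimal (· ∈ I) x} := by
  ext x
  simp only [genSet, mem_ofPred_eq, minimal_mem_iff, eq_comm]

theorem socSet_eq_setOf_maximal (I : Set (Fin n → ℕ)) :
    socSet I = {x | Maximal (· ∈ I) x} := by
  ext x
  simp only [socSet, mem_ofPred_eq, maximal_mem_iff, eq_comm]

theorem IsSymmetricIdeal.exists_bijOn_genSet_socSet {I : Set (Fin n → ℕ)}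
    (h : IsSymmetricIdeal I) :
    ∃ (m : Fin n → ℕ) (g : (Fin n → ℕ) → (Fin n → ℕ)),
      BijOn g (genSet I) (socSet I) ∧ ∀ u ∈ genSet I, u + g u = m := by
  obtain ⟨m, f, hf, hsum⟩ := h
  have hrev : ∀ ⦃x y⦄, x ∈ I → y ∈ I → (f x ≤ f y ↔ y ≤ x) := fun x y hx hy =>
    le_iff_le_of_add_eq (hsum x hx) (hsum y hy)
  refine ⟨m, f, ?_, fun u hu => (add_comm _ _).trans (hsum u hu.1)⟩
  rw [genSet_eq_setOf_minimal, socSet_eq_setOf_maximal]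
  exact hf.bijOn_minimal_maximal hrev

theorem isSymmetricIdeal_of_tsub_mem {I : Set (Fin n → ℕ)} {m : Fin n → ℕ}
    (hle : ∀ v ∈ I, v ≤ m) (hmem : ∀ v ∈ I, m - v ∈ I) : IsSymmetricIdeal I :=
  ⟨m, (m - ·),
    InvOn.bijOn ⟨fun v hv => tsub_tsub_cancel_of_le (hle v hv),
      fun v hv => tsub_tsub_cancel_of_le (hle v hv)⟩ hmem hmem,
    fun v hv => tsub_add_cancel_of_le (hle v hv)⟩

theorem exists_mem_genSet_le {I : Set (Fin n → ℕ)} (hI : I.Finite) {v : Fin n → ℕ}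
    (hv : v ∈ I) : ∃ u ∈ genSet I, u ≤ v := by
  obtain ⟨u, huv, hu⟩ := hI.exists_le_minimal hv
  exact ⟨u, (genSet_eq_setOf_minimal I).ge hu, huv⟩

theorem exists_mem_socSet_ge {I : Set (Fin n → ℕ)} (hI : I.Finite) {v : Fin n → ℕ}
    (hv : v ∈ I) : ∃ b ∈ socSet I, v ≤ b := by
  obtain ⟨b, hvb, hb⟩ := hI.exists_le_maximal hv
  exact ⟨b, (socSet_eq_setOf_maximal I).ge hb, hvb⟩

theorem isSymmetricIdeal_of_bijOn_genSet_socSet {P I : Set (Fin n → ℕ)}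
    (hP : IsDivisorPoset P) (hI : IsPosetIdealOf P I) {m : Fin n → ℕ}
    {g : (Fin n → ℕ) → (Fin n → ℕ)} (hg : BijOn g (genSet I) (socSet I))
    (hsum : ∀ u ∈ genSet I, u + g u = m) : IsSymmetricIdeal I := by
  obtain ⟨hPfin, hPdown⟩ := hP
  obtain ⟨hIP, hIup⟩ := hI
  have hIfin : I.Finite := hPfin.subset hIP
  have hle : ∀ v ∈ I, v ≤ m := by
    intro v hv
    obtain ⟨b, hb, hvb⟩ := exists_mem_socSet_ge hIfin hv
    obtain ⟨u, hu, rfl⟩ := hg.surjOn hb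
    exact hvb.trans (hsum u hu ▸ le_add_self)
  refine isSymmetricIdeal_of_tsub_mem hle fun v hv => ?_
  -- `m - v` divides the socle element paired with a generator below `v`, so it lies in `P`,
  -- and it is a multiple of the generator paired with a socle element above `v`.
  obtain ⟨u, hu, huv⟩ := exists_mem_genSet_le hIfin hv
  obtain ⟨b, hb, hvb⟩ := exists_mem_socSet_ge hIfin hv
  obtain ⟨u', hu', rfl⟩ := hg.surjOn hb
  have hmP : m - v ∈ P := by
    refine hPdown (g u) (hIP (hg.mapsTo hu).1) _ ?_
    calc m - v ≤ m - u := tsub_le_tsub_left huv m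
      _ = g u := by rw [← hsum u hu, add_tsub_cancel_left]
  have hu'le : u' ≤ m - v := le_tsub_of_add_le_right (hsum u' hu' ▸ add_le_add_right hvb u')
  exact hIup u' hu'.1 (m - v) hmP hu'le

end DivisorPoset

/-- A poset ideal `I` of a divisor poset `P` is symmetric iff (after relabelling) there is a
bijective pairing of `Gen(I)` with `Soc(I)` for which the product `a_i·b_i` is a constant
monomial, i.e. `a_i·b_i = a_j·b_j` for all `i, j`. -/
theorem stmt8 {n : ℕ} (P I : Set (Fin n → ℕ)) (hP : IsDivisorPoset P)
    (hI : IsPosetIdealOf P I) :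
    IsSymmetricIdeal I ↔
      ∃ (m : Fin n → ℕ) (g : (Fin n → ℕ) → (Fin n → ℕ)),
        Set.BijOn g (genSet I) (socSet I) ∧ ∀ u ∈ genSet I, u + g u = m :=
  ⟨IsSymmetricIdeal.exists_bijOn_genSet_socSet,
    fun ⟨_, _, hg, hsum⟩ => isSymmetricIdeal_of_bijOn_genSet_socSet hP hI hg hsum⟩
end

section
/- Let S = K[x_1,...,x_n], n ≥ 2, and R = S/(x_1^{a_1},...,x_n^{a_n}, w) where w = x_1^{b_1}···x_n^{b_n} with 0 ≤ b_i < a_i for all i and b_i > 0 for at least two indices i. Then tr(ω_R) is the ideal of R generated by the monomials x_i^{a_i − b_i} for those i with b_i > 0, together with the monomials w/x_i^{b_i} for those i with b_i > 0. -/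
/-- The almost complete intersection monomial ideal
`(x_1^{a_1}, …, x_n^{a_n}, x_1^{b_1}⋯x_n^{b_n})`. -/
noncomputable def aciIdeal (K : Type*) [Field K] (n : ℕ) (a b : Fin n → ℕ) :
    Ideal (MvPolynomial (Fin n) K) :=
  Ideal.span (Set.range (fun i => MvPolynomial.X i ^ a i) ∪
    {∏ i, MvPolynomial.X i ^ b i})

/-!
`R` has the `K`-basis of standard monomials `x^c` (`c < a` coordinatewise, `c ≱ b`), so
`ω_R = Hom_K(R, K)` has the dual basis `c*`, on which `x^u` acts by `x^u • c* = (c - u)*` if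
`u ≤ c` and `0` otherwise. Every `c*` is therefore a multiple of some `s_k*`, where
`x^{s_k} = x^{a-1} / x_k^{a_k-b_k}` with `b_k > 0`, and `x_k^{b_k} • s_k* = 0`. So an `R`-linear
`f : ω_R → R` sends `s_k*` into `0 :_R x_k^{b_k} = (x_k^{a_k-b_k}, w / x_k^{b_k})`, and all of
`ω_R` into the sum of these ideals.

Conversely, the `K`-linear map `c* ↦ x^{G c}` is `R`-linear as soon as
`x_j x^{G c} = x^{G (c - e_j)}` (read as `0` when `c_j = 0`). This holds for `G c = a - 1 - c`
and for its twist by `w / x_k^{a_k}`, which send `s_k*` to `x_k^{a_k-b_k}` and `w / x_k^{b_k}`.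
-/

open MvPolynomial

namespace AlmostCompleteIntersection

section Monomial

variable {σ R : Type*} [Fintype σ] [CommSemiring R]

noncomputable def mon (v : σ → ℕ) : MvPolynomial σ R := ∏ j, X j ^ v j

theorem mon_eq_monomial (v : σ → ℕ) :
    (mon v : MvPolynomial σ R) = monomial (Finsupp.equivFunOnFinite.symm v) 1 := by
  rw [monomial_eq, C_1, one_mul, Finsupp.prod_fintype _ _ fun _ => pow_zero _]
  rfl

theorem mon_add (v w : σ → ℕ) : (mon (v + w) : MvPolynomial σ R) = mon v * mon w := by
  simp only [mon, Pi.add_apply, pow_add, Finset.prod_mul_distrib]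

theorem mon_dvd_mon {u v : σ → ℕ} (h : u ≤ v) : (mon u : MvPolynomial σ R) ∣ mon v :=
  ⟨mon (v - u), by rw [← mon_add, add_tsub_cancel_of_le h]⟩

theorem mon_single [DecidableEq σ] (j : σ) (t : ℕ) :
    (mon (Pi.single j t) : MvPolynomial σ R) = X j ^ t := by
  rw [mon, Finset.prod_eq_single j] <;> simp +contextual

theorem mon_update_zero [DecidableEq σ] (v : σ → ℕ) (k : σ) :
    (mon (Function.update v k 0) : MvPolynomial σ R) = ∏ j, if j = k then 1 else X j ^ v j := by
  refine Finset.prod_congr rfl fun j _ => ?_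
  by_cases h : j = k <;> simp [h]

open scoped Classical in
theorem coeff_mon_mul (c v : σ → ℕ) (p : MvPolynomial σ R) :
    coeff (Finsupp.equivFunOnFinite.symm c) (mon v * p) =
      if v ≤ c then coeff (Finsupp.equivFunOnFinite.symm (c - v)) p else 0 := by
  rw [mon_eq_monomial, coeff_monomial_mul', one_mul]
  simp only [Finsupp.le_def, Finsupp.coe_equivFunOnFinite_symm, ← Pi.le_def]
  split_ifs
  · congr 1
    ext
    simp
  · rfl

theorem coeff_mon [DecidableEq σ] (c v : σ → ℕ) :
    coeff (Finsupp.equivFunOnFinite.symm c) (mon v : MvPolynomial σ R) =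
      if v = c then 1 else 0 := by
  rw [mon_eq_monomial, coeff_monomial]
  exact if_congr Finsupp.equivFunOnFinite.symm.injective.eq_iff rfl rfl

end Monomial

theorem rLinearDualMap_of_comp_X {K σ : Type*} [Field K] {I : Ideal (MvPolynomial σ K)}
    (f : ((MvPolynomial σ K ⧸ I) →ₗ[K] K) →ₗ[K] (MvPolynomial σ K ⧸ I))
    (hX : ∀ j ψ, f (ψ.comp (LinearMap.mulLeft K (Ideal.Quotient.mk I (X j)))) =
      Ideal.Quotient.mk I (X j) * f ψ) :
    RLinearDualMap K (MvPolynomial σ K ⧸ I) f := by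
  intro r ψ
  obtain ⟨p, rfl⟩ := Ideal.Quotient.mk_surjective r
  induction p using MvPolynomial.induction_on generalizing ψ with
  | C k =>
    have hk : Ideal.Quotient.mk I (C k) = algebraMap K _ k := by
      rw [← MvPolynomial.algebraMap_eq, Ideal.Quotient.mk_algebraMap]
    have hψ : ψ.comp (LinearMap.mulLeft K (Ideal.Quotient.mk I (C k))) = k • ψ := by
      refine LinearMap.ext fun x => ?_
      rw [LinearMap.comp_apply, LinearMap.mulLeft_apply, hk, ← Algebra.smul_def, map_smul,
        LinearMap.smul_apply]
    rw [hψ, map_smul, hk, ← Algebra.smul_def]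
  | add p q hp hq =>
    have hψ : ψ.comp (LinearMap.mulLeft K (Ideal.Quotient.mk I (p + q))) =
        ψ.comp (LinearMap.mulLeft K (Ideal.Quotient.mk I p)) +
          ψ.comp (LinearMap.mulLeft K (Ideal.Quotient.mk I q)) :=
      LinearMap.ext fun x => by simp [add_mul]
    rw [hψ, map_add, hp, hq, map_add, add_mul]
  | mul_X p j hp =>
    rw [map_mul, LinearMap.mulLeft_mul, ← LinearMap.comp_assoc, hX, hp, mul_left_comm, mul_assoc]

section Quotient

variable {K : Type*} [Field K] {n : ℕ} {a b : Fin n → ℕ}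

local notation "𝓡" => MvPolynomial (Fin n) K ⧸ aciIdeal K n a b
local notation "π" => Ideal.Quotient.mk (aciIdeal K n a b)

variable (a b) in
def standardExps : Finset (Fin n → ℕ) :=
  (Fintype.piFinset fun j => Finset.range (a j)).filter fun v => ∃ k, v k < b k

theorem mem_standardExps {v : Fin n → ℕ} :
    v ∈ standardExps a b ↔ (∀ j, v j < a j) ∧ ∃ k, v k < b k := by
  simp [standardExps]

theorem mem_standardExps_of_le {c d : Fin n → ℕ} (hc : c ∈ standardExps a b) (h : d ≤ c) :
    d ∈ standardExps a b := by
  obtain ⟨hca, k, hk⟩ := mem_standardExps.1 hc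
  exact mem_standardExps.2 ⟨fun j => (h j).trans_lt (hca j), k, (h k).trans_lt hk⟩

variable (a b) in
theorem aciIdeal_eq_span_monomial :
    aciIdeal K n a b = Ideal.span ((fun d => monomial d (1 : K)) ''
      (Set.range (fun i => Finsupp.single i (a i)) ∪ {Finsupp.equivFunOnFinite.symm b})) := by
  rw [aciIdeal, Set.image_union, Set.image_singleton, ← Set.range_comp]
  simp only [Function.comp_def, ← X_pow_eq_monomial, ← mon_eq_monomial]
  rfl

variable (a b) in
theorem exists_generator_le_iff (v : Fin n → ℕ) :
    (∃ s ∈ Set.range (fun i => Finsupp.single i (a i)) ∪ {Finsupp.equivFunOnFinite.symm b},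
      s ≤ Finsupp.equivFunOnFinite.symm v) ↔ v ∉ standardExps a b := by
  simp only [Set.mem_union, Set.mem_range, Set.mem_singleton_iff, mem_standardExps, not_and,
    not_exists, not_lt]
  constructor
  · rintro ⟨s, ⟨i, rfl⟩ | rfl, hs⟩ hva
    · exact absurd (Finsupp.single_le_iff.1 hs) (by simpa using hva i)
    · simpa [Finsupp.le_def] using hs
  · intro h
    by_cases hva : ∀ j, v j < a j
    · exact ⟨_, Or.inr rfl, by simpa [Finsupp.le_def] using h hva⟩
    · obtain ⟨i, hi⟩ := not_forall.1 hva
      exact ⟨_, Or.inl ⟨i, rfl⟩, Finsupp.single_le_iff.2 (by simpa using not_lt.1 hi)⟩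

variable (a b) in
theorem mk_mon_eq_zero_iff {v : Fin n → ℕ} : π (mon v) = 0 ↔ v ∉ standardExps a b := by
  rw [Ideal.Quotient.eq_zero_iff_mem, aciIdeal_eq_span_monomial, mon_eq_monomial,
    mem_ideal_span_monomial_image, ← exists_generator_le_iff]
  classical
  simp [support_monomial]

theorem mk_mon_eq_zero_of_le_apply {v : Fin n → ℕ} (j : Fin n) (h : a j ≤ v j) :
    (π (mon v) : 𝓡) = 0 :=
  (mk_mon_eq_zero_iff a b).2 fun hv => (h.trans_lt ((mem_standardExps.1 hv).1 j)).false

theorem mk_mon_eq_zero_of_le {v : Fin n → ℕ} (h : b ≤ v) : (π (mon v) : 𝓡) = 0 :=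
  (mk_mon_eq_zero_iff a b).2 fun hv =>
    let ⟨k, hk⟩ := (mem_standardExps.1 hv).2
    (h k).not_gt hk

theorem coeff_eq_zero_of_mem_aciIdeal {q : MvPolynomial (Fin n) K} (hq : q ∈ aciIdeal K n a b)
    {c : Fin n → ℕ} (hc : c ∈ standardExps a b) :
    coeff (Finsupp.equivFunOnFinite.symm c) q = 0 := by
  rw [aciIdeal_eq_span_monomial, mem_ideal_span_monomial_image] at hq
  by_contra h
  exact (exists_generator_le_iff a b c).1 (hq _ (mem_support_iff.2 h)) hc

variable (a b) in
theorem mk_eq_sum (p : MvPolynomial (Fin n) K) :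
    π p = ∑ c ∈ standardExps a b,
      coeff (Finsupp.equivFunOnFinite.symm c) p • π (mon c) := by
  have hsum : π (∑ c ∈ standardExps a b, coeff (Finsupp.equivFunOnFinite.symm c) p • mon c) =
      ∑ c ∈ standardExps a b, coeff (Finsupp.equivFunOnFinite.symm c) p • π (mon c) := by
    simp only [← Ideal.Quotient.mkₐ_eq_mk K, map_sum, map_smul]
  rw [← hsum, Ideal.Quotient.mk_eq_mk_iff_sub_mem, aciIdeal_eq_span_monomial,
    mem_ideal_span_monomial_image]
  intro d hd
  obtain ⟨v, rfl⟩ := Finsupp.equivFunOnFinite.symm.surjective d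
  refine (exists_generator_le_iff a b v).2 fun hv => mem_support_iff.1 hd ?_
  simp [coeff_sum, coeff_mon, hv]

-- The dual basis vector `c*` (junk `0` for nonstandard `c`).
variable (a b) in
noncomputable def dualMon (c : Fin n → ℕ) : 𝓡 →ₗ[K] K :=
  if hc : c ∈ standardExps a b then
    ((aciIdeal K n a b).restrictScalars K).liftQ (lcoeff K (Finsupp.equivFunOnFinite.symm c))
        (fun _ hq => coeff_eq_zero_of_mem_aciIdeal hq hc) ∘ₗ
      (Submodule.Quotient.restrictScalarsEquiv K (aciIdeal K n a b)).symm.toLinearMap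
  else 0

-- The `K`-linear map `ω_R → R` with `c* ↦ g c`.
variable (a b) in
noncomputable def liftDual (g : (Fin n → ℕ) → 𝓡) : (𝓡 →ₗ[K] K) →ₗ[K] 𝓡 :=
  ∑ c ∈ standardExps a b, (LinearMap.applyₗ (π (mon c))).smulRight (g c)

theorem dualMon_mk {c : Fin n → ℕ} (hc : c ∈ standardExps a b) (p : MvPolynomial (Fin n) K) :
    dualMon a b c (π p) = coeff (Finsupp.equivFunOnFinite.symm c) p := by
  rw [dualMon, dif_pos hc]
  rfl

theorem dualMon_mk_mon {c : Fin n → ℕ} (hc : c ∈ standardExps a b) (v : Fin n → ℕ) :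
    dualMon a b c (π (mon v) : 𝓡) = if v = c then 1 else 0 := by
  rw [dualMon_mk hc, coeff_mon]

theorem eq_sum_dualMon_smul (r : 𝓡) :
    r = ∑ c ∈ standardExps a b, dualMon a b c r • π (mon c) := by
  obtain ⟨p, rfl⟩ := Ideal.Quotient.mk_surjective r
  refine (mk_eq_sum a b p).trans (Finset.sum_congr rfl fun c hc => ?_)
  rw [dualMon_mk hc]

theorem eq_sum_smul_dualMon (ψ : 𝓡 →ₗ[K] K) :
    ψ = ∑ c ∈ standardExps a b, ψ (π (mon c)) • dualMon a b c := by
  refine LinearMap.ext fun r => ?_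
  conv_lhs => rw [eq_sum_dualMon_smul r]
  simp [mul_comm]

open scoped Classical in
theorem dualMon_comp_mulLeft {c : Fin n → ℕ} (hc : c ∈ standardExps a b) (v : Fin n → ℕ) :
    (dualMon a b c).comp (LinearMap.mulLeft K (π (mon v))) =
      if v ≤ c then dualMon a b (c - v) else 0 := by
  refine LinearMap.ext fun r => ?_
  obtain ⟨p, rfl⟩ := Ideal.Quotient.mk_surjective r
  rw [LinearMap.comp_apply, LinearMap.mulLeft_apply, ← map_mul, dualMon_mk hc, coeff_mon_mul]
  split_ifs
  · rw [dualMon_mk (mem_standardExps_of_le hc tsub_le_self)]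
  · rfl

theorem liftDual_apply (g : (Fin n → ℕ) → 𝓡) (ψ : 𝓡 →ₗ[K] K) :
    liftDual a b g ψ = ∑ c ∈ standardExps a b, ψ (π (mon c)) • g c := by
  simp [liftDual]

theorem liftDual_dualMon (g : (Fin n → ℕ) → 𝓡) {c : Fin n → ℕ}
    (hc : c ∈ standardExps a b) :
    liftDual a b g (dualMon a b c) = g c := by
  rw [liftDual_apply, Finset.sum_eq_single_of_mem c hc fun v _ hv => by
    rw [dualMon_mk_mon hc, if_neg hv, zero_smul]]
  rw [dualMon_mk_mon hc, if_pos rfl, one_smul]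

theorem rLinearDualMap_of_dualMon (f : (𝓡 →ₗ[K] K) →ₗ[K] 𝓡)
    (hf : ∀ j, ∀ c ∈ standardExps a b,
      f ((dualMon a b c).comp (LinearMap.mulLeft K (π (X j)))) = π (X j) * f (dualMon a b c)) :
    RLinearDualMap K 𝓡 f := by
  refine rLinearDualMap_of_comp_X f fun j ψ => ?_
  have hcomp : ∀ φ : 𝓡 →ₗ[K] K, φ.comp (LinearMap.mulLeft K (π (X j))) =
      LinearMap.lcomp K K (LinearMap.mulLeft K (π (X j))) φ := fun _ => rfl
  rw [eq_sum_smul_dualMon ψ, hcomp]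
  simp only [map_sum, map_smul, Finset.mul_sum, mul_smul_comm]
  exact Finset.sum_congr rfl fun c hc => by rw [← hcomp, hf j c hc]

theorem rLinearDualMap_liftDual_mon (G : (Fin n → ℕ) → Fin n → ℕ)
    (hG : ∀ j, ∀ c ∈ standardExps a b, (π (mon (G c + Pi.single j 1)) : 𝓡) =
      if 0 < c j then π (mon (G (c - Pi.single j 1))) else 0) :
    RLinearDualMap K 𝓡 (liftDual a b fun c => π (mon (G c))) := by
  refine rLinearDualMap_of_dualMon _ fun j c hc => ?_
  have hle : Pi.single j 1 ≤ c ↔ 0 < c j := by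
    refine ⟨fun h => Nat.add_one_le_iff.1 (by simpa using h j), fun h i => ?_⟩
    by_cases hi : i = j
    · subst hi
      simpa using Nat.add_one_le_iff.2 h
    · simp [hi]
  rw [← pow_one (X j), ← mon_single, dualMon_comp_mulLeft hc, liftDual_dualMon _ hc,
    ← map_mul, ← mon_add, add_comm, hG j c hc]
  simp only [hle]
  split_ifs
  · exact liftDual_dualMon _ (mem_standardExps_of_le hc tsub_le_self)
  · exact map_zero _

variable (a b) in
def socleExp (k : Fin n) : Fin n → ℕ := Function.update (a - 1) k (b k - 1)

theorem socleExp_mem (hb : ∀ i, b i < a i) {k : Fin n} (hk : 0 < b k) :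
    socleExp a b k ∈ standardExps a b := by
  refine mem_standardExps.2 ⟨fun j => ?_, k, by simp [socleExp]; omega⟩
  have := hb j
  by_cases hj : j = k
  · subst hj
    simp [socleExp]
    omega
  · simp [socleExp, hj]
    omega

theorem exists_le_socleExp {v : Fin n → ℕ} (hv : v ∈ standardExps a b) :
    ∃ k, 0 < b k ∧ v ≤ socleExp a b k := by
  obtain ⟨hva, k, hk⟩ := mem_standardExps.1 hv
  refine ⟨k, by omega, fun j => ?_⟩
  have := hva j
  by_cases hj : j = k
  · subst hj
    simp [socleExp]
    omega
  · simp [socleExp, hj]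
    omega

theorem dualMon_eq_comp_socleExp (hb : ∀ i, b i < a i) {v : Fin n → ℕ}
    (hv : v ∈ standardExps a b) :
    ∃ k, 0 < b k ∧ dualMon a b v = (dualMon a b (socleExp a b k)).comp
      (LinearMap.mulLeft K (π (mon (socleExp a b k - v)))) := by
  obtain ⟨k, hk, hle⟩ := exists_le_socleExp hv
  refine ⟨k, hk, ?_⟩
  rw [dualMon_comp_mulLeft (socleExp_mem hb hk), if_pos tsub_le_self,
    tsub_tsub_cancel_of_le hle]

theorem dualMon_socleExp_comp_X_pow (hb : ∀ i, b i < a i) {k : Fin n} (hk : 0 < b k) :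
    (dualMon a b (socleExp a b k)).comp (LinearMap.mulLeft K (π (X k ^ b k))) = 0 := by
  rw [← mon_single, dualMon_comp_mulLeft (socleExp_mem hb hk), if_neg]
  intro h
  have := h k
  simp [socleExp] at this
  omega

variable (K a b) in
noncomputable def monomialTraceIdeal : Ideal 𝓡 :=
  Ideal.span ((fun i => π (X i ^ (a i - b i))) '' {i | 0 < b i} ∪
    (fun i => π (∏ j, if j = i then 1 else X j ^ b j)) '' {i | 0 < b i})

theorem le_or_le_of_add_single_not_mem {v : Fin n → ℕ} (hv : v ∈ standardExps a b) (k : Fin n)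
    (hvk : v + Pi.single k (b k) ∉ standardExps a b) :
    Pi.single k (a k - b k) ≤ v ∨ Function.update b k 0 ≤ v := by
  have hva := (mem_standardExps.1 hv).1
  by_cases hak : a k ≤ v k + b k
  · refine Or.inl fun i => ?_
    by_cases hi : i = k
    · subst hi
      simp
      omega
    · simp [hi]
  refine Or.inr fun i => ?_
  have hbv : ∀ i, b i ≤ (v + Pi.single k (b k) : Fin n → ℕ) i := by
    by_contra h
    refine hvk (mem_standardExps.2 ⟨fun i => ?_, not_forall_not.1 (by simpa using h)⟩)
    have := hva i
    by_cases hi : i = k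
    · subst hi
      simp
      omega
    · simp [hi]
      omega
  by_cases hi : i = k
  · subst hi
    simp
  · simpa [hi] using hbv i

theorem mem_monomialTraceIdeal_of_X_pow_mul_eq_zero {k : Fin n} (hk : 0 < b k) {r : 𝓡}
    (hr : π (X k ^ b k) * r = 0) : r ∈ monomialTraceIdeal K a b := by
  rw [eq_sum_dualMon_smul r]
  refine Ideal.sum_mem _ fun v hv => ?_
  by_cases hvk : v + Pi.single k (b k) ∈ standardExps a b
  -- the coefficient of `x^v` in `r` is that of `x^{v + b_k e_k}` in `x_k^{b_k} r = 0`
  · have h := dualMon_comp_mulLeft (K := K) hvk (Pi.single k (b k))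
    rw [if_pos le_add_self, add_tsub_cancel_right, mon_single] at h
    rw [← h, LinearMap.comp_apply, LinearMap.mulLeft_apply, hr, map_zero, zero_smul]
    exact zero_mem _
  refine Submodule.smul_of_tower_mem _ _ ?_
  rcases le_or_le_of_add_single_not_mem hv k hvk with hle | hle
  · refine Ideal.mem_of_dvd _ (map_dvd π (mon_dvd_mon hle)) (Ideal.subset_span (Or.inl ?_))
    exact ⟨k, hk, by rw [mon_single]⟩
  · refine Ideal.mem_of_dvd _ (map_dvd π (mon_dvd_mon hle)) (Ideal.subset_span (Or.inr ?_))
    exact ⟨k, hk, by rw [mon_update_zero]⟩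

theorem apply_mem_monomialTraceIdeal (hb : ∀ i, b i < a i) {f : (𝓡 →ₗ[K] K) →ₗ[K] 𝓡}
    (hf : RLinearDualMap K 𝓡 f) (ψ : 𝓡 →ₗ[K] K) : f ψ ∈ monomialTraceIdeal K a b := by
  rw [eq_sum_smul_dualMon ψ, map_sum]
  refine Ideal.sum_mem _ fun v hv => ?_
  obtain ⟨k, hk, hvk⟩ := dualMon_eq_comp_socleExp (K := K) hb hv
  rw [map_smul, hvk, hf]
  refine Submodule.smul_of_tower_mem _ _ (Ideal.mul_mem_left _ _ ?_)
  refine mem_monomialTraceIdeal_of_X_pow_mul_eq_zero hk ?_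
  rw [← hf, dualMon_socleExp_comp_X_pow hb hk, map_zero]

theorem traceIdeal_le (hb : ∀ i, b i < a i) :
    traceIdeal K 𝓡 ≤ monomialTraceIdeal K a b :=
  Ideal.span_le.2 fun _ ⟨_, hf, ψ, hψ⟩ => hψ ▸ apply_mem_monomialTraceIdeal hb hf ψ

variable (a) in
def complExp (c : Fin n → ℕ) : Fin n → ℕ := a - 1 - c

-- As Laurent monomials, `x^{twistedComplExp a b k c} = x^{complExp a c} * w / x_k^{a_k}`.
variable (a b) in
def twistedComplExp (k : Fin n) (c : Fin n → ℕ) : Fin n → ℕ :=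
  Function.update (a - 1 + b - c) k (b k - 1 - c k)

theorem mk_mon_complExp_add_single (j : Fin n) {c : Fin n → ℕ} (hc : c ∈ standardExps a b) :
    (π (mon (complExp a c + Pi.single j 1)) : 𝓡) =
      if 0 < c j then π (mon (complExp a (c - Pi.single j 1))) else 0 := by
  have hca := (mem_standardExps.1 hc).1
  split_ifs with hj
  · congr 2
    funext i
    have := hca i
    by_cases hi : i = j
    · subst hi
      simp [complExp]
      omega
    · simp [complExp, hi]
  · refine mk_mon_eq_zero_of_le_apply j ?_
    have := hca j
    simp [complExp]
    omega

theorem twistedComplExp_add_single {k j : Fin n} {c : Fin n → ℕ} (hca : c j < a j)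
    (hj : 0 < c j) (hjk : j = k → c k < b k) :
    twistedComplExp a b k c + Pi.single j 1 = twistedComplExp a b k (c - Pi.single j 1) := by
  funext i
  by_cases hij : i = j
  · subst hij
    by_cases hik : i = k
    · subst hik
      have := hjk rfl
      simp [twistedComplExp]
      omega
    · simp [twistedComplExp, hik]
      omega
  · rcases eq_or_ne i k with rfl | hik <;> simp [twistedComplExp, *]

theorem mk_mon_twistedComplExp_add_single (k j : Fin n) {c : Fin n → ℕ}
    (hc : c ∈ standardExps a b) :
    (π (mon (twistedComplExp a b k c + Pi.single j 1)) : 𝓡) =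
      if 0 < c j then π (mon (twistedComplExp a b k (c - Pi.single j 1))) else 0 := by
  obtain ⟨hca, l, hl⟩ := mem_standardExps.1 hc
  split_ifs with hj
  · by_cases hjk : j = k → c k < b k
    · rw [twistedComplExp_add_single (hca j) hj hjk]
    -- both sides vanish: the other index `l` with `c l < b l` pushes the exponent past `a l`
    obtain ⟨rfl, hbj⟩ := Classical.not_imp.1 hjk
    have hlj : l ≠ j := by rintro rfl; omega
    have := hca l
    rw [mk_mon_eq_zero_of_le_apply l (by simp [twistedComplExp, hlj]; omega),
      mk_mon_eq_zero_of_le_apply l (by simp [twistedComplExp, hlj]; omega)]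
  · by_cases hjk : j = k
    · subst hjk
      refine mk_mon_eq_zero_of_le fun i => ?_
      have := hca i
      by_cases hi : i = j <;> simp [twistedComplExp, hi] <;> omega
    · refine mk_mon_eq_zero_of_le_apply j ?_
      simp [twistedComplExp, hjk]
      omega

theorem complExp_socleExp (hb : ∀ i, b i < a i) {k : Fin n} (hk : 0 < b k) :
    complExp a (socleExp a b k) = Pi.single k (a k - b k) := by
  funext i
  have := hb i
  by_cases hi : i = k
  · subst hi
    simp [complExp, socleExp]
    omega
  · simp [complExp, socleExp, hi]

theorem twistedComplExp_socleExp (k : Fin n) :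
    twistedComplExp a b k (socleExp a b k) = Function.update b k 0 := by
  funext i
  by_cases hi : i = k <;> simp [twistedComplExp, socleExp, hi]

theorem mk_mon_mem_traceIdeal (G : (Fin n → ℕ) → Fin n → ℕ)
    (hG : ∀ j, ∀ c ∈ standardExps a b, (π (mon (G c + Pi.single j 1)) : 𝓡) =
      if 0 < c j then π (mon (G (c - Pi.single j 1))) else 0)
    {c : Fin n → ℕ} (hc : c ∈ standardExps a b) :
    (π (mon (G c)) : 𝓡) ∈ traceIdeal K 𝓡 :=
  Ideal.subset_span ⟨_, rLinearDualMap_liftDual_mon G hG, _, liftDual_dualMon _ hc⟩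

theorem le_traceIdeal (hb : ∀ i, b i < a i) :
    monomialTraceIdeal K a b ≤ traceIdeal K 𝓡 := by
  refine Ideal.span_le.2 ?_
  rintro _ (⟨k, hk, rfl⟩ | ⟨k, hk, rfl⟩)
  · have h := mk_mon_mem_traceIdeal (K := K) (complExp a) (fun j _ => mk_mon_complExp_add_single j)
      (socleExp_mem hb hk)
    rwa [complExp_socleExp hb hk, mon_single] at h
  · have h := mk_mon_mem_traceIdeal (K := K) (twistedComplExp a b k)
      (fun j _ => mk_mon_twistedComplExp_add_single k j) (socleExp_mem hb hk)
    rwa [twistedComplExp_socleExp, mon_update_zero] at h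

end Quotient

end AlmostCompleteIntersection

theorem stmt10_general (K : Type*) [Field K] (n : ℕ) (a b : Fin n → ℕ)
    (hb : ∀ i, b i < a i) :
    traceIdeal K (MvPolynomial (Fin n) K ⧸ aciIdeal K n a b) =
      Ideal.span
        ((fun i => Ideal.Quotient.mk (aciIdeal K n a b)
            (MvPolynomial.X i ^ (a i - b i))) '' {i | 0 < b i} ∪
         (fun i => Ideal.Quotient.mk (aciIdeal K n a b)
            (∏ j, if j = i then 1 else MvPolynomial.X j ^ b j)) '' {i | 0 < b i}) :=
  le_antisymm (AlmostCompleteIntersection.traceIdeal_le hb)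
    (AlmostCompleteIntersection.le_traceIdeal hb)

/-- For the almost complete intersection `R = S/(x_1^{a_1},…,x_n^{a_n}, w)` with
`w = x_1^{b_1}⋯x_n^{b_n}`, `b_i < a_i` for all `i` and `b_i > 0` for at least two indices,
the trace of `ω_R` is generated by the monomials `x_i^{a_i-b_i}` and `w/x_i^{b_i}`
for those `i` with `b_i > 0`. -/
theorem stmt10 (K : Type*) [Field K] (n : ℕ) (a b : Fin n → ℕ)
    (hb : ∀ i, b i < a i) (h2 : ∃ i j, i ≠ j ∧ 0 < b i ∧ 0 < b j) :
    traceIdeal K (MvPolynomial (Fin n) K ⧸ aciIdeal K n a b) =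
      Ideal.span
        ((fun i => Ideal.Quotient.mk (aciIdeal K n a b)
            (MvPolynomial.X i ^ (a i - b i))) '' {i | 0 < b i} ∪
         (fun i => Ideal.Quotient.mk (aciIdeal K n a b)
            (∏ j, if j = i then 1 else MvPolynomial.X j ^ b j)) '' {i | 0 < b i}) :=
  stmt10_general K n a b hb
end

section
/- Let R = S/(x_1^{a_1},...,x_n^{a_n}, x_1^{b_1}···x_n^{b_n}) with 0 ≤ b_i < a_i for all i and b_i > 0 for at least two i. Then R is of Teter type (in the multigraded sense) if and only if there exist indices j ≠ j' with 2b_j ≥ a_j and 2b_{j'} ≥ a_{j'}. -/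
/-- The divisor poset of `R = S/(x_1^{a_1},…,x_n^{a_n}, x^b)`: exponent vectors of the
monomials surviving in `R`. -/
def aciPoset (n : ℕ) (a b : Fin n → ℕ) : Set (Fin n → ℕ) :=
  {c | (∀ i, c i < a i) ∧ ¬ b ≤ c}

/-- The trace poset ideal of the almost complete intersection: the poset ideal of the
divisor poset generated by the monomials `x_i^{a_i-b_i}` and `w/x_i^{b_i}` for `b_i > 0`. -/
def aciTraceSet (n : ℕ) (a b : Fin n → ℕ) : Set (Fin n → ℕ) :=
  {c ∈ aciPoset n a b | ∃ i, 0 < b i ∧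
    ((fun j => if j = i then a i - b i else 0) ≤ c ∨
     (fun j => if j = i then 0 else b j) ≤ c)}

/-!
A symmetric monomial set `I` is one mapped onto itself by `v ↦ m - v` for a fixed exponent `m`.
For the trace `T` of the almost complete intersection, the socle monomials
`x_i^{b_i-1} ∏_{k≠i} x_k^{a_k-1}` and the generators `x_i^{a_i-b_i}` of `T` pin `m` down to
`a - 1`. The mirror `a - 1 - v` of the generator `v = w/x_i^{b_i}` avoids `x^b` exactly when
`a_k ≤ 2 b_k` for some `k ≠ i`; applying this to `i` and then to that `k` gives two indices.
Conversely, two such indices make every `v ∈ T` satisfy `v_k ≥ a_k - b_k` for some `k`, so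
`a - 1 - v` avoids `x^b`, while `v` avoiding `x^b` puts `a - 1 - v` above some `x_k^{a_k-b_k}`.
-/

theorem isSymmetricIdeal_iff_exists_tsub_mem {n : ℕ} {I : Set (Fin n → ℕ)} :
    IsSymmetricIdeal I ↔ ∃ m, ∀ v ∈ I, v ≤ m ∧ m - v ∈ I := by
  constructor
  · rintro ⟨m, f, hf, hsum⟩
    refine ⟨m, fun v hv => ⟨hsum v hv ▸ le_add_self, ?_⟩⟩
    rw [tsub_eq_of_eq_add (hsum v hv).symm]
    exact hf.mapsTo hv
  · rintro ⟨m, hm⟩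
    refine ⟨m, (m - ·), ⟨fun v hv => (hm v hv).2, fun u hu v hv huv => ?_, fun u hu => ?_⟩,
      fun v hv => tsub_add_cancel_of_le (hm v hv).1⟩
    · rw [← tsub_tsub_cancel_of_le (hm u hu).1, show m - u = m - v from huv,
        tsub_tsub_cancel_of_le (hm v hv).1]
    · exact ⟨m - u, (hm u hu).2, tsub_tsub_cancel_of_le (hm u hu).1⟩

section AlmostCompleteIntersection

variable {n : ℕ} {a b : Fin n → ℕ}

/-- The exponent of the generator `x_i^{a_i-b_i}` of the trace. -/
def powGen (a b : Fin n → ℕ) (i : Fin n) : Fin n → ℕ :=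
  fun j => if j = i then a i - b i else 0

/-- The exponent of the generator `w/x_i^{b_i}` of the trace. -/
def quotGen (b : Fin n → ℕ) (i : Fin n) : Fin n → ℕ :=
  fun j => if j = i then 0 else b j

/-- The exponent of the socle monomial `x_i^{b_i-1} ∏_{k≠i} x_k^{a_k-1}` of the divisor poset. -/
def socleExp (a b : Fin n → ℕ) (i : Fin n) : Fin n → ℕ :=
  fun k => if k = i then b i - 1 else a k - 1

theorem powGen_mem_aciTraceSet (hb : ∀ i, b i < a i) {i j : Fin n} (hji : j ≠ i)
    (hi : 0 < b i) (hj : 0 < b j) : powGen a b i ∈ aciTraceSet n a b := by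
  refine ⟨⟨fun k => ?_, fun hle => ?_⟩, i, hi, Or.inl le_rfl⟩
  · have := hb k; unfold powGen; split_ifs with hk
    · subst hk; omega
    · omega
  · have := hle j; simp [powGen, hji] at this; omega

theorem quotGen_mem_aciTraceSet (hb : ∀ i, b i < a i) {i : Fin n} (hi : 0 < b i) :
    quotGen b i ∈ aciTraceSet n a b := by
  refine ⟨⟨fun k => ?_, fun hle => ?_⟩, i, hi, Or.inr le_rfl⟩
  · have := hb k; unfold quotGen; split_ifs <;> omega
  · have := hle i; simp [quotGen] at this; omega

theorem socleExp_mem_aciTraceSet (hb : ∀ i, b i < a i) {i : Fin n} (hi : 0 < b i) :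
    socleExp a b i ∈ aciTraceSet n a b := by
  refine ⟨⟨fun k => ?_, fun hle => ?_⟩, i, hi, Or.inr fun k => ?_⟩
  · have := hb k; unfold socleExp; split_ifs with hk
    · subst hk; omega
    · omega
  · have := hle i; simp [socleExp] at this; omega
  · have := hb k; simp only [socleExp]; split_ifs with hk
    · subst hk; omega
    · omega

theorem eq_sub_one_of_forall_tsub_mem_aciTraceSet (hb : ∀ i, b i < a i)
    (h2 : ∃ i j, i ≠ j ∧ 0 < b i ∧ 0 < b j) {m : Fin n → ℕ}
    (hm : ∀ v ∈ aciTraceSet n a b, v ≤ m ∧ m - v ∈ aciTraceSet n a b) : m = a - 1 := by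
  have coord : ∀ l l', l' ≠ l → 0 < b l → 0 < b l' → ∀ k ≠ l, m k = a k - 1 := by
    intro l l' hl' hl hbl' k hk
    have lower := (hm _ (socleExp_mem_aciTraceSet hb hl)).1 k
    have upper := (hm _ (powGen_mem_aciTraceSet hb hl' hl hbl')).2.1.1 k
    simp only [socleExp, powGen, Pi.sub_apply, if_neg hk] at lower upper
    omega
  obtain ⟨i, j, hij, hi, hj⟩ := h2
  funext k
  by_cases hk : k = i
  · exact coord j i hij hj hi k (hk ▸ hij)
  · exact coord i j hij.symm hi hj k hk

theorem exists_ne_le_two_mul_of_forall_mem_aciTraceSet (hb : ∀ i, b i < a i)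
    (hm : ∀ v ∈ aciTraceSet n a b, a - 1 - v ∈ aciTraceSet n a b) {i : Fin n} (hi : 0 < b i) :
    ∃ k, k ≠ i ∧ a k ≤ 2 * b k := by
  obtain ⟨k, hk⟩ : ∃ k, (a - 1 - quotGen b i) k < b k := by
    simpa [Pi.le_def] using (hm _ (quotGen_mem_aciTraceSet hb hi)).1.2
  have := hb k
  by_cases hki : k = i
  · subst hki; simp [quotGen] at hk; omega
  · exact ⟨k, hki, by simp [quotGen, hki] at hk; omega⟩

theorem sub_one_tsub_mem_aciTraceSet (hb : ∀ i, b i < a i) {j j' : Fin n} (hjj' : j ≠ j')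
    (hj : a j ≤ 2 * b j) (hj' : a j' ≤ 2 * b j') {v : Fin n → ℕ} (hv : v ∈ aciTraceSet n a b) :
    a - 1 - v ∈ aciTraceSet n a b := by
  obtain ⟨⟨hva, hbv⟩, i, -, hgen⟩ := hv
  obtain ⟨k₀, hk₀⟩ : ∃ k, a k - b k ≤ v k := by
    rcases hgen with h | h
    · exact ⟨i, by simpa using h i⟩
    · obtain ⟨k, hki, hk⟩ : ∃ k, k ≠ i ∧ a k ≤ 2 * b k :=
        if hji : j = i then ⟨j', hji ▸ hjj'.symm, hj'⟩ else ⟨j, hji, hj⟩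
      exact ⟨k, by have := h k; simp [hki] at this; omega⟩
  obtain ⟨k₁, hk₁⟩ : ∃ k, v k < b k := by simpa [Pi.le_def] using hbv
  refine ⟨⟨fun k => ?_, fun hle => ?_⟩, k₁, by omega, Or.inl fun k => ?_⟩
  · have := hb k; simp only [Pi.sub_apply, Pi.one_apply]; omega
  · have := hva k₀; have := hle k₀; simp only [Pi.sub_apply, Pi.one_apply] at this; omega
  · have := hva k; simp only [Pi.sub_apply, Pi.one_apply]; split_ifs with hk
    · subst hk; omega
    · omega

end AlmostCompleteIntersection

/-- The almost complete intersection `R = S/(x_1^{a_1},…,x_n^{a_n}, x_1^{b_1}⋯x_n^{b_n})`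
(with `b_i < a_i` for all `i` and `b_i > 0` at least twice) is of Teter type in the
multigraded sense — i.e. its trace poset ideal is symmetric — iff there exist `j ≠ j'`
with `2b_j ≥ a_j` and `2b_{j'} ≥ a_{j'}`. -/
theorem stmt11 (n : ℕ) (a b : Fin n → ℕ)
    (hb : ∀ i, b i < a i) (h2 : ∃ i j, i ≠ j ∧ 0 < b i ∧ 0 < b j) :
    IsSymmetricIdeal (aciTraceSet n a b) ↔
      ∃ j j', j ≠ j' ∧ a j ≤ 2 * b j ∧ a j' ≤ 2 * b j' := by
  rw [isSymmetricIdeal_iff_exists_tsub_mem]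
  constructor
  · rintro ⟨m, hm⟩
    obtain rfl := eq_sub_one_of_forall_tsub_mem_aciTraceSet hb h2 hm
    have hmirror : ∀ v ∈ aciTraceSet n a b, a - 1 - v ∈ aciTraceSet n a b :=
      fun v hv => (hm v hv).2
    obtain ⟨i, -, -, hi, -⟩ := h2
    obtain ⟨k, -, hk⟩ := exists_ne_le_two_mul_of_forall_mem_aciTraceSet hb hmirror hi
    obtain ⟨k', hk'k, hk'⟩ := exists_ne_le_two_mul_of_forall_mem_aciTraceSet hb hmirror
      (show 0 < b k by have := hb k; omega)
    exact ⟨k', k, hk'k, hk', hk⟩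
  · rintro ⟨j, j', hjj', hj, hj'⟩
    exact ⟨a - 1, fun v hv =>
      ⟨fun k => Nat.le_sub_one_of_lt (hv.1.1 k), sub_one_tsub_mem_aciTraceSet hb hjj' hj hj' hv⟩⟩
end

section
/- Let P be a finite poset, L = J(P) its lattice of poset ideals ordered by inclusion, and Δ(L) the order complex of L. Let π be a linear extension of P, C_π the corresponding maximal chain of L, and C_π^♯ the chain of ideals α_q = {a_{i_1},...,a_{i_{j(q)}}} obtained from the ascent decomposition of π. If C is a chain of L such that C_π is the unique maximal chain of L containing C, then C_π^♯ ⊆ C. -/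
/-- A poset ideal (downward closed subset) of a poset `α`. -/
def IsPosetIdeal {α : Type*} [PartialOrder α] (I : Set α) : Prop :=
  ∀ x ∈ I, ∀ y, y ≤ x → y ∈ I

/-- A chain of the distributive lattice `L = J(P)` of poset ideals of `α`, ordered by
inclusion. -/
def IsIdealChain {α : Type*} [PartialOrder α] (M : Set (Set α)) : Prop :=
  (∀ I ∈ M, IsPosetIdeal I) ∧ IsChain (· ⊆ ·) M

/-- A maximal chain of `L = J(P)`. -/
def IsMaxIdealChain {α : Type*} [PartialOrder α] (M : Set (Set α)) : Prop :=
  IsIdealChain M ∧ ∀ M' : Set (Set α), IsIdealChain M' → M ⊆ M' → M' = M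

/-- The poset ideal `{a_{i_1}, …, a_{i_j}}` consisting of the first `j` elements of the
linear extension `e`. -/
def prefixIdeal {α : Type*} {n : ℕ} (e : Fin n ≃ α) (j : ℕ) : Set α :=
  {x | ((e.symm x : Fin n) : ℕ) < j}

/-- The maximal chain `C_π` of `L = J(P)` associated with the linear extension `e`. -/
def maxChainOf {α : Type*} {n : ℕ} (e : Fin n ≃ α) : Set (Set α) :=
  {S | ∃ j ≤ n, S = prefixIdeal e j}

/-- The chain `C_π^♯` of `C_π`: the proper prefixes ending at the ascent breaks of the
linear extension `e` (positions `j` with `1 ≤ j ≤ n-1` where `a_{i_j} < a_{i_{j+1}}`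
fails). -/
def sharpChainOf {α : Type*} [PartialOrder α] {n : ℕ} (e : Fin n ≃ α) : Set (Set α) :=
  {S | ∃ i : Fin n, 0 < (i : ℕ) ∧ ¬ e ⟨(i : ℕ) - 1, Nat.lt_of_le_of_lt (Nat.sub_le _ _) i.isLt⟩ < e i ∧ S = prefixIdeal e (i : ℕ)}

/-!
Swapping two adjacent entries `a_{i_{j-1}}, a_{i_j}` of `π` that do not form an ascent gives
another linear extension `π'`. Its maximal chain `C_{π'}` agrees with `C_π` except at the
single ideal of size `j - 1`, which in `C_π` is the element `α_q = {a_{i_1}, …, a_{i_{j-1}}}`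
of `C_π^♯`. So if `C ⊆ C_π` misses `α_q`, then `C ⊆ C_{π'} ≠ C_π`, and `C_π` is not the
unique maximal chain containing `C`.
-/

section PrefixIdeal

variable {α : Type*} {n : ℕ} (e : Fin n ≃ α)

theorem mem_prefixIdeal {j : ℕ} {x : α} : x ∈ prefixIdeal e j ↔ ((e.symm x : Fin n) : ℕ) < j :=
  Iff.rfl

@[simp]
theorem apply_mem_prefixIdeal {j : ℕ} {k : Fin n} : e k ∈ prefixIdeal e j ↔ (k : ℕ) < j := by
  simp [mem_prefixIdeal]

theorem prefixIdeal_mono : Monotone (prefixIdeal e) :=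
  fun _ _ h _ hx => lt_of_lt_of_le hx h

theorem subset_prefixIdeal_length (I : Set α) : I ⊆ prefixIdeal e n :=
  fun x _ => (e.symm x).isLt

theorem exists_eq_prefixIdeal_of_comparable (I : Set α)
    (h : ∀ j ≤ n, I ⊆ prefixIdeal e j ∨ prefixIdeal e j ⊆ I) :
    ∃ j ≤ n, I = prefixIdeal e j := by
  classical
  -- for the least `j` with `I ⊆ prefixIdeal e j`, `I` lies strictly between two prefixes
  -- that differ in the single element `e (j - 1)`
  have hex : ∃ j, I ⊆ prefixIdeal e j := ⟨n, subset_prefixIdeal_length e I⟩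
  set j := Nat.find hex
  have hjn : j ≤ n := Nat.find_min' hex (subset_prefixIdeal_length e I)
  refine ⟨j, hjn, (Nat.find_spec hex).antisymm fun x hx => ?_⟩
  rw [mem_prefixIdeal] at hx
  have hnot : ¬ I ⊆ prefixIdeal e (j - 1) := Nat.find_min hex (by omega)
  obtain ⟨y, hyI, hy⟩ := Set.not_subset.1 hnot
  have hyj : ((e.symm y : Fin n) : ℕ) < j := Nat.find_spec hex hyI
  rw [mem_prefixIdeal] at hy
  rcases h (j - 1) (by omega) with hsub | hsub
  · exact absurd hsub hnot
  by_cases hxj : ((e.symm x : Fin n) : ℕ) < j - 1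
  · exact hsub hxj
  · obtain rfl : x = y := e.symm.injective (Fin.ext (by omega))
    exact hyI

variable [PartialOrder α]

theorem isIdealChain_maxChainOf (hlin : ∀ i j : Fin n, e i < e j → i < j) :
    IsIdealChain (maxChainOf e) := by
  constructor
  · rintro _ ⟨j, -, rfl⟩ x hx y hyx
    rw [mem_prefixIdeal] at hx ⊢
    rcases hyx.eq_or_lt with rfl | hlt
    · exact hx
    · have : e.symm y < e.symm x := hlin _ _ (by simpa using hlt)
      exact lt_trans (Fin.lt_def.1 this) hx
  · rintro _ ⟨j, -, rfl⟩ _ ⟨j', -, rfl⟩ -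
    exact (le_total j j').imp (prefixIdeal_mono e ·) (prefixIdeal_mono e ·)

theorem isMaxIdealChain_maxChainOf (hlin : ∀ i j : Fin n, e i < e j → i < j) :
    IsMaxIdealChain (maxChainOf e) := by
  refine ⟨isIdealChain_maxChainOf e hlin, fun M hM hsub => (Set.Subset.antisymm · hsub) ?_⟩
  intro I hI
  refine exists_eq_prefixIdeal_of_comparable e I fun j hj => ?_
  by_cases heq : I = prefixIdeal e j
  · exact Or.inr heq.ge
  · exact hM.2 hI (hsub ⟨j, hj, rfl⟩) heq

end PrefixIdeal

section AdjacentSwap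

variable {α : Type*} {n : ℕ} {a i : Fin n}

theorem swap_lt_swap_of_succ_eq (hai : (a : ℕ) + 1 = i) {k l : Fin n}
    (hkl : ¬ (k = i ∧ l = a)) (h : Equiv.swap a i k < Equiv.swap a i l) : k < l := by
  rw [Equiv.swap_apply_def, Equiv.swap_apply_def] at h
  rw [Fin.lt_def]
  simp only [Fin.ext_iff] at hkl
  split_ifs at h <;> simp only [Fin.lt_def, Fin.ext_iff] at * <;> omega

theorem swap_lt_iff_of_succ_eq (hai : (a : ℕ) + 1 = i) {j : ℕ} (hj : j ≠ i) (m : Fin n) :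
    ((Equiv.swap a i m : Fin n) : ℕ) < j ↔ (m : ℕ) < j := by
  rw [Equiv.swap_apply_def]
  split_ifs <;> simp only [Fin.ext_iff] at * <;> omega

variable (e : Fin n ≃ α)

theorem prefixIdeal_swap_trans_of_ne (hai : (a : ℕ) + 1 = i) {j : ℕ} (hj : j ≠ i) :
    prefixIdeal ((Equiv.swap a i).trans e) j = prefixIdeal e j := by
  ext x
  simp only [mem_prefixIdeal, Equiv.symm_trans_apply, Equiv.symm_swap]
  exact swap_lt_iff_of_succ_eq hai hj _

theorem prefixIdeal_swap_trans_notMem_maxChainOf (hai : (a : ℕ) + 1 = i) :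
    prefixIdeal ((Equiv.swap a i).trans e) i ∉ maxChainOf e := by
  rintro ⟨j, -, hj⟩
  have hi : e i ∈ prefixIdeal ((Equiv.swap a i).trans e) i := by
    simp only [mem_prefixIdeal, Equiv.symm_trans_apply, Equiv.symm_swap, Equiv.symm_apply_apply,
      Equiv.swap_apply_right]
    omega
  have ha : e a ∉ prefixIdeal ((Equiv.swap a i).trans e) i := by
    simp only [mem_prefixIdeal, Equiv.symm_trans_apply, Equiv.symm_swap, Equiv.symm_apply_apply,
      Equiv.swap_apply_left]
    omega
  rw [hj, apply_mem_prefixIdeal] at hi ha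
  omega

variable [PartialOrder α]

theorem swap_trans_isLinearExtension (hai : (a : ℕ) + 1 = i) (hasc : ¬ e a < e i)
    (hlin : ∀ k l : Fin n, e k < e l → k < l) :
    ∀ k l : Fin n, (Equiv.swap a i).trans e k < (Equiv.swap a i).trans e l → k < l := by
  intro k l h
  refine swap_lt_swap_of_succ_eq hai ?_ (hlin _ _ h)
  rintro ⟨rfl, rfl⟩
  simp only [Equiv.trans_apply, Equiv.swap_apply_left, Equiv.swap_apply_right] at h
  exact hasc h

end AdjacentSwap

theorem stmt17_general {α : Type*} [PartialOrder α] {n : ℕ}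
    (e : Fin n ≃ α) (hlin : ∀ i j : Fin n, e i < e j → i < j)
    (C : Set (Set α))
    (hsub : C ⊆ maxChainOf e)
    (huniq : ∀ M : Set (Set α), IsMaxIdealChain M → C ⊆ M → M = maxChainOf e) :
    sharpChainOf e ⊆ C := by
  rintro _ ⟨i, hi, hasc, rfl⟩
  by_contra hiC
  set a : Fin n := ⟨(i : ℕ) - 1, Nat.lt_of_le_of_lt (Nat.sub_le _ _) i.isLt⟩
  have hai : (a : ℕ) + 1 = i := by simp only [a]; omega
  have hsub' : C ⊆ maxChainOf ((Equiv.swap a i).trans e) := by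
    intro S hS
    obtain ⟨j, hj, rfl⟩ := hsub hS
    have hji : j ≠ i := by rintro rfl; exact hiC hS
    exact ⟨j, hj, (prefixIdeal_swap_trans_of_ne e hai hji).symm⟩
  have hmax := isMaxIdealChain_maxChainOf _ (swap_trans_isLinearExtension e hai hasc hlin)
  have heq := huniq _ hmax hsub'
  exact prefixIdeal_swap_trans_notMem_maxChainOf e hai (heq ▸ ⟨i, i.isLt.le, rfl⟩)

/-- Let `L = J(P)` be the lattice of poset ideals of a finite poset, `π` a linear extension
of `P` with associated maximal chain `C_π` and chain `C_π^♯`.  If `C` is a chain of `L`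
such that `C_π` is the unique maximal chain of `L` containing `C`, then `C_π^♯ ⊆ C`. -/
theorem stmt17 {α : Type*} [PartialOrder α] [Fintype α] {n : ℕ}
    (e : Fin n ≃ α) (hlin : ∀ i j : Fin n, e i < e j → i < j)
    (C : Set (Set α)) (hC : IsIdealChain C)
    (hsub : C ⊆ maxChainOf e)
    (huniq : ∀ M : Set (Set α), IsMaxIdealChain M → C ⊆ M → M = maxChainOf e) :
    sharpChainOf e ⊆ C :=
  stmt17_general e hlin C hsub huniq
end

section
/- Let n ≥ 2, let Δ(P_n) be the independence complex of the path graph P_n, and let F = {a_1 < ··· < a_s} ⊆ [n] be an independent set. Then F is a free face of Δ(P_n) and is minimal among the free faces contained in its unique containing facet if and only if F is τ-permissible, i.e.: (i) a_{i+1} − a_i ∈ {2,3,4} for all 1 ≤ i < s (with a_0 = −1, a_{s+1} = n+2 and a_1 − a_0 ∈ {2,3,4}, a_{s+1} − a_s ∈ {2,3,4}), and (ii) there is no index i with a_{i+1} − a_i = 2 and a_i − a_{i−1} = 2. -/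
/-- A subset of the vertex set `{1,…,n}` (viewed inside `ℤ`) is independent in the path
graph `P_n` iff its elements are pairwise at distance at least `2`. -/
def PathIndep (G : Finset ℤ) : Prop :=
  ∀ x ∈ G, ∀ y ∈ G, x ≠ y → 2 ≤ |x - y|

/-- `G ⊆ [n]`. -/
def InVertexRange (n : ℕ) (G : Finset ℤ) : Prop := ∀ x ∈ G, 1 ≤ x ∧ x ≤ (n : ℤ)

/-- A facet of the independence complex `Δ(P_n)`: a maximal independent set of `P_n`. -/
def IsPathFacet (n : ℕ) (G : Finset ℤ) : Prop :=
  InVertexRange n G ∧ PathIndep G ∧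
    ∀ G' : Finset ℤ, InVertexRange n G' → PathIndep G' → G ⊆ G' → G' = G

/-- A free face of `Δ(P_n)`: a face contained in a unique facet. -/
def IsPathFreeFace (n : ℕ) (F : Finset ℤ) : Prop :=
  InVertexRange n F ∧ PathIndep F ∧ ∃! G : Finset ℤ, IsPathFacet n G ∧ F ⊆ G

/-!
Pad `F` with the sentinels `-1` and `n + 2` and look at the gaps between consecutive elements.
Every face containing `F` consists of vertices not adjacent to `F`; these vertices form an
independent set, which is then the unique facet containing `F`, exactly when every gap has length
at most `4`, while a gap of length at least `5` leaves room for two adjacent vertices `b + 2`,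
`b + 3` that lie in different facets. So `F` is free iff all gaps are at most `4`.

A vertex `x ∈ F` can be dropped from a free face keeping it free iff the two gaps around `x` merge
into one of length at most `4`, i.e. (gaps being at least `2`) iff both have length `2`; and every
free face contained in `F` must contain each vertex that cannot be dropped.
-/

theorem PathIndep.mono {F G : Finset ℤ} (hG : PathIndep G) (h : F ⊆ G) : PathIndep F :=
  fun x hx y hy hxy => hG x (h hx) y (h hy) hxy

theorem InVertexRange.mono {n : ℕ} {F G : Finset ℤ} (hG : InVertexRange n G) (h : F ⊆ G) :
    InVertexRange n F :=
  fun x hx => hG x (h hx)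

theorem PathIndep.two_le_sub {F : Finset ℤ} {x y : ℤ} (hF : PathIndep F) (hx : x ∈ F)
    (hy : y ∈ F) (hxy : x < y) : 2 ≤ y - x := by
  have := hF y hy x hx hxy.ne'
  rwa [abs_of_pos (sub_pos.2 hxy)] at this

theorem pathIndep_insert {F : Finset ℤ} {d : ℤ} (hF : PathIndep F)
    (hd : ∀ y ∈ F, 2 ≤ |d - y|) : PathIndep (insert d F) := by
  intro x hx y hy hxy
  rw [Finset.mem_insert] at hx hy
  rcases hx with rfl | hx <;> rcases hy with rfl | hy
  · exact absurd rfl hxy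
  · exact hd y hy
  · exact abs_sub_comm y x ▸ hd x hx
  · exact hF x hx y hy hxy

theorem exists_isPathFacet_superset {n : ℕ} {F : Finset ℤ} (hr : InVertexRange n F)
    (hi : PathIndep F) : ∃ G, IsPathFacet n G ∧ F ⊆ G := by
  classical
  let faces := (Finset.Icc 1 (n : ℤ)).powerset.filter PathIndep
  have mem_faces : ∀ {G}, G ∈ faces ↔ InVertexRange n G ∧ PathIndep G := by
    simp [faces, InVertexRange, Finset.subset_iff]
  obtain ⟨G, hFG, hG, hmax⟩ := faces.exists_le_maximal (mem_faces.2 ⟨hr, hi⟩)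
  rw [mem_faces] at hG
  exact ⟨G, ⟨hG.1, hG.2, fun G' hr' hi' hGG' => (hmax (mem_faces.2 ⟨hr', hi'⟩) hGG').antisymm hGG'⟩,
    hFG⟩

theorem Finset.exists_greatest_lt {α : Type*} [LinearOrder α] (s : Finset α) {lo x : α}
    (h : lo < x) : ∃ b ∈ insert lo s, b < x ∧ ∀ y ∈ s, y < x → y ≤ b := by
  classical
  have hne : ((insert lo s).filter (· < x)).Nonempty := ⟨lo, by simp [h]⟩
  obtain ⟨hmem, hlt⟩ := Finset.mem_filter.1 (Finset.max'_mem _ hne)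
  exact ⟨_, hmem, hlt, fun y hy hyx => Finset.le_max' _ y (by simp [hy, hyx])⟩

theorem Finset.exists_least_gt {α : Type*} [LinearOrder α] (s : Finset α) {hi x : α}
    (h : x < hi) : ∃ c ∈ insert hi s, x < c ∧ ∀ y ∈ s, x < y → c ≤ y := by
  classical
  have hne : ((insert hi s).filter (x < ·)).Nonempty := ⟨hi, by simp [h]⟩
  obtain ⟨hmem, hlt⟩ := Finset.mem_filter.1 (Finset.min'_mem _ hne)
  exact ⟨_, hmem, hlt, fun y hy hxy => Finset.min'_le _ y (by simp [hy, hxy])⟩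

section Gaps

variable {n : ℕ} {F : Finset ℤ} {b c x : ℤ}

/-- `b < c` are consecutive elements of `{-1} ∪ F ∪ {n + 2}`; the two sentinels play the role
of `a_0` and `a_{s+1}`. -/
def IsPathGap (n : ℕ) (F : Finset ℤ) (b c : ℤ) : Prop :=
  b ∈ insert (-1 : ℤ) F ∧ c ∈ insert ((n : ℤ) + 2) F ∧ b < c ∧ ∀ y ∈ F, y ≤ b ∨ c ≤ y

theorem exists_isPathGap_around (hx : x ∉ F) (h1 : -1 < x) (h2 : x < n + 2) :
    ∃ b c, IsPathGap n F b c ∧ b < x ∧ x < c := by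
  obtain ⟨b, hb, hbx, hleft⟩ := F.exists_greatest_lt h1
  obtain ⟨c, hc, hxc, hright⟩ := F.exists_least_gt h2
  refine ⟨b, c, ⟨hb, hc, hbx.trans hxc, fun y hy => ?_⟩, hbx, hxc⟩
  rcases lt_trichotomy y x with h | rfl | h
  exacts [Or.inl (hleft y hy h), absurd hy hx, Or.inr (hright y hy h)]

theorem exists_isPathGap_left (hr : InVertexRange n F) (hx : x ∈ F) : ∃ b, IsPathGap n F b x := by
  obtain ⟨b, hb, hbx, hleft⟩ := F.exists_greatest_lt (by linarith [(hr x hx).1] : -1 < x)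
  refine ⟨b, hb, Finset.mem_insert_of_mem hx, hbx, fun y hy => ?_⟩
  rcases lt_or_ge y x with h | h
  exacts [Or.inl (hleft y hy h), Or.inr h]

theorem exists_isPathGap_right (hr : InVertexRange n F) (hx : x ∈ F) :
    ∃ c, IsPathGap n F x c := by
  obtain ⟨c, hc, hxc, hright⟩ := F.exists_least_gt (by linarith [(hr x hx).2] : x < n + 2)
  refine ⟨c, Finset.mem_insert_of_mem hx, hc, hxc, fun y hy => ?_⟩
  rcases le_or_gt y x with h | h
  exacts [Or.inl h, Or.inr (hright y hy h)]

namespace IsPathGap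

theorem bounds (hr : InVertexRange n F) (h : IsPathGap n F b c) : -1 ≤ b ∧ c ≤ n + 2 := by
  obtain ⟨hb, hc, -, -⟩ := h
  constructor
  · rcases Finset.mem_insert.1 hb with rfl | hb
    exacts [le_rfl, by linarith [(hr b hb).1]]
  · rcases Finset.mem_insert.1 hc with rfl | hc
    exacts [le_rfl, by linarith [(hr c hc).2]]

theorem le_left (hr : InVertexRange n F) (h : IsPathGap n F b c) {b' : ℤ}
    (hb' : b' ∈ insert (-1 : ℤ) F) (hb'c : b' < c) : b' ≤ b := by
  rcases Finset.mem_insert.1 hb' with rfl | hb'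
  · exact (h.bounds hr).1
  · have := h.2.2.2 b' hb'
    omega

theorem le_right (hr : InVertexRange n F) (h : IsPathGap n F b c) {c' : ℤ}
    (hc' : c' ∈ insert ((n : ℤ) + 2) F) (hbc' : b < c') : c ≤ c' := by
  rcases Finset.mem_insert.1 hc' with rfl | hc'
  · exact (h.bounds hr).2
  · have := h.2.2.2 c' hc'
    omega

theorem two_le_sub (hr : InVertexRange n F) (hi : PathIndep F) (h : IsPathGap n F b c) :
    2 ≤ c - b := by
  obtain ⟨hb, hc, hbc, -⟩ := h
  rcases Finset.mem_insert.1 hb with rfl | hb <;> rcases Finset.mem_insert.1 hc with rfl | hc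
  · omega
  · linarith [(hr c hc).1]
  · linarith [(hr b hb).2]
  · exact hi.two_le_sub hb hc hbc

end IsPathGap

theorem IsPathFreeFace.sub_le_four (hF : IsPathFreeFace n F) (h : IsPathGap n F b c) :
    c - b ≤ 4 := by
  obtain ⟨hr, hi, G, ⟨hG, -⟩, huniq⟩ := hF
  obtain ⟨hb, hc⟩ := h.bounds hr
  by_contra! hbc
  have mem_G : ∀ d, b + 2 ≤ d → d ≤ c - 2 → d ∈ G := by
    intro d hd1 hd2
    have hdr : InVertexRange n (insert d F) := by
      intro y hy
      rcases Finset.mem_insert.1 hy with rfl | hy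
      exacts [⟨by omega, by omega⟩, hr y hy]
    have hdi : PathIndep (insert d F) := pathIndep_insert hi fun y hy => by
      rw [le_abs]
      have := h.2.2.2 y hy
      omega
    obtain ⟨K, hK, hdK⟩ := exists_isPathFacet_superset hdr hdi
    obtain rfl : K = G := huniq K ⟨hK, (Finset.subset_insert d F).trans hdK⟩
    exact hdK (Finset.mem_insert_self d F)
  have := hG.2.1.two_le_sub (mem_G (b + 2) le_rfl (by omega)) (mem_G (b + 3) (by omega) (by omega))
    (by omega)
  omega

end Gaps

section Freeness

variable {n : ℕ} {F : Finset ℤ}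

noncomputable def pathNonNeighbors (n : ℕ) (F : Finset ℤ) : Finset ℤ :=
  (Finset.Icc 1 (n : ℤ)).filter fun x => ∀ y ∈ F, x ≠ y → 2 ≤ |x - y|

theorem subset_pathNonNeighbors {H : Finset ℤ} (hr : InVertexRange n H) (hi : PathIndep H)
    (hFH : F ⊆ H) : H ⊆ pathNonNeighbors n F :=
  fun x hx => Finset.mem_filter.2 ⟨Finset.mem_Icc.2 (hr x hx), fun y hy => hi x hx y (hFH hy)⟩

theorem inVertexRange_pathNonNeighbors : InVertexRange n (pathNonNeighbors n F) :=
  fun _ hx => Finset.mem_Icc.1 (Finset.mem_filter.1 hx).1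

theorem isPathFreeFace_of_pathIndep_pathNonNeighbors (hr : InVertexRange n F) (hi : PathIndep F)
    (hG : PathIndep (pathNonNeighbors n F)) : IsPathFreeFace n F := by
  have hFG := subset_pathNonNeighbors hr hi subset_rfl
  refine ⟨hr, hi, pathNonNeighbors n F, ⟨⟨inVertexRange_pathNonNeighbors, hG,
    fun G' hr' hi' hG' => (subset_pathNonNeighbors hr' hi' (hFG.trans hG')).antisymm hG'⟩, hFG⟩, ?_⟩
  rintro K ⟨⟨hKr, hKi, hKmax⟩, hFK⟩
  exact (hKmax _ inVertexRange_pathNonNeighbors hG (subset_pathNonNeighbors hKr hKi hFK)).symm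

/-- Two adjacent non-neighbours `x`, `x + 1` of `F` would lie in one gap `(b, c)` of `F` with
`b ≤ x - 2` and `x + 3 ≤ c`. -/
theorem pathIndep_pathNonNeighbors (hgap : ∀ b c, IsPathGap n F b c → c - b ≤ 4) :
    PathIndep (pathNonNeighbors n F) := by
  have far : ∀ y ∈ pathNonNeighbors n F, ∀ z, z ∈ insert (-1 : ℤ) (insert ((n : ℤ) + 2) F) →
      y ≠ z → y + 2 ≤ z ∨ z + 2 ≤ y := by
    intro y hy z hz hyz
    obtain ⟨hy', hyF⟩ := Finset.mem_filter.1 hy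
    rw [Finset.mem_Icc] at hy'
    simp only [Finset.mem_insert] at hz
    rcases hz with rfl | rfl | hz
    · omega
    · omega
    · have := hyF z hz hyz
      rw [le_abs] at this
      omega
  have no_succ : ∀ x ∈ pathNonNeighbors n F, x + 1 ∉ pathNonNeighbors n F := by
    intro x hx hx1
    have hxF : x ∉ F := fun hxF => by
      have := far (x + 1) hx1 x (by simp [hxF]) (by omega)
      omega
    obtain ⟨h1, h2⟩ := inVertexRange_pathNonNeighbors x hx
    obtain ⟨h1', h2'⟩ := inVertexRange_pathNonNeighbors (x + 1) hx1
    obtain ⟨b, c, hbc, hbx, hxc⟩ := exists_isPathGap_around (n := n) hxF (by omega) (by omega)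
    have hb := far x hx b (Finset.insert_subset_insert _ (Finset.subset_insert _ _) hbc.1) (by omega)
    have hc := far x hx c (Finset.subset_insert _ _ hbc.2.1) (by omega)
    have hc' := far (x + 1) hx1 c (Finset.subset_insert _ _ hbc.2.1) (by omega)
    have := hgap b c hbc
    omega
  intro x hx y hy hxy
  rw [le_abs]
  by_contra! h
  rcases (by omega : y = x + 1 ∨ x = y + 1) with rfl | rfl
  exacts [no_succ x hx hy, no_succ y hy hx]

theorem isPathFreeFace_iff (hr : InVertexRange n F) (hi : PathIndep F) :
    IsPathFreeFace n F ↔ ∀ b c, IsPathGap n F b c → c - b ≤ 4 :=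
  ⟨fun hF _ _ => hF.sub_le_four, fun h =>
    isPathFreeFace_of_pathIndep_pathNonNeighbors hr hi (pathIndep_pathNonNeighbors h)⟩

variable {x b c : ℤ}

/-- The gaps of `F.erase x` are those of `F` together with the merged gap `(b, c)`. -/
theorem IsPathFreeFace.erase (hF : IsPathFreeFace n F) (hx : x ∈ F) (hb : IsPathGap n F b x)
    (hc : IsPathGap n F x c) (hbc : c - b ≤ 4) : IsPathFreeFace n (F.erase x) := by
  have hr := hF.1
  have hi := hF.2.1
  have hr' := hr.mono (F.erase_subset x)
  obtain ⟨hx1, hxn⟩ := hr x hx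
  have hbx := hb.2.2.1
  have hxc := hc.2.2.1
  rw [isPathFreeFace_iff hr' (hi.mono (F.erase_subset x))]
  rintro b' c' ⟨hb', hc', hbc', hmid'⟩
  by_cases hx' : b' < x ∧ x < c'
  · have hb_mem : b ∈ insert (-1 : ℤ) (F.erase x) := by
      rw [← Finset.erase_insert_of_ne (by omega)]
      exact Finset.mem_erase.2 ⟨hbx.ne, hb.1⟩
    have hc_mem : c ∈ insert ((n : ℤ) + 2) (F.erase x) := by
      rw [← Finset.erase_insert_of_ne (by omega)]
      exact Finset.mem_erase.2 ⟨hxc.ne', hc.2.1⟩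
    have h1 := IsPathGap.le_left hr' ⟨hb', hc', hbc', hmid'⟩ hb_mem (by omega)
    have h2 := IsPathGap.le_right hr' ⟨hb', hc', hbc', hmid'⟩ hc_mem (by omega)
    omega
  · refine (isPathFreeFace_iff hr hi).1 hF b' c' ⟨?_, ?_, hbc', fun y hy => ?_⟩
    · exact Finset.insert_subset_insert _ (F.erase_subset x) hb'
    · exact Finset.insert_subset_insert _ (F.erase_subset x) hc'
    · by_cases hyx : y = x
      · omega
      · exact hmid' y (Finset.mem_erase.2 ⟨hyx, hy⟩)

theorem IsPathFreeFace.mem_of_subset {F' : Finset ℤ} (hF' : IsPathFreeFace n F') (hF'F : F' ⊆ F)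
    (hr : InVertexRange n F) (hx : x ∈ F) (hb : IsPathGap n F b x) (hc : IsPathGap n F x c)
    (hbc : 4 < c - b) : x ∈ F' := by
  by_contra hx'
  obtain ⟨hx1, hxn⟩ := hr x hx
  obtain ⟨b', c', hgap, hb'x, hxc'⟩ := exists_isPathGap_around (n := n) hx' (by omega) (by omega)
  have h1 := hb.le_left hr (Finset.insert_subset_insert _ hF'F hgap.1) hb'x
  have h2 := hc.le_right hr (Finset.insert_subset_insert _ hF'F hgap.2.1) hxc'
  have := hF'.sub_le_four hgap
  omega

theorem isPathFreeFace_minimal_iff (hr : InVertexRange n F) (hi : PathIndep F) :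
    (IsPathFreeFace n F ∧ ∀ F' ⊆ F, IsPathFreeFace n F' → F' = F) ↔
      (∀ b c, IsPathGap n F b c → c - b ≤ 4) ∧
        ∀ x ∈ F, ∀ b c, IsPathGap n F b x → IsPathGap n F x c → 4 < c - b := by
  rw [← isPathFreeFace_iff hr hi]
  refine ⟨fun ⟨hF, hmin⟩ => ⟨hF, fun x hx b c hb hc => ?_⟩, fun ⟨hF, hrigid⟩ => ⟨hF, ?_⟩⟩
  · by_contra! hbc
    have := hmin _ (F.erase_subset x) (hF.erase hx hb hc hbc)
    exact F.notMem_erase x (by rwa [this])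
  · intro F' hF'F hF'
    refine hF'F.antisymm fun x hx => ?_
    obtain ⟨b, hb⟩ := exists_isPathGap_left hr hx
    obtain ⟨c, hc⟩ := exists_isPathGap_right hr hx
    exact hF'.mem_of_subset hF'F hr hx hb hc (hrigid x hx b c hb hc)

end Freeness

structure PathEnumeration (n s : ℕ) (a : ℕ → ℤ) (F : Finset ℤ) : Prop where
  zero : a 0 = -1
  last : a (s + 1) = n + 2
  strictMonoOn : StrictMonoOn a (Set.Iic (s + 1))
  mem_iff : ∀ x, x ∈ F ↔ ∃ i, 1 ≤ i ∧ i ≤ s ∧ a i = x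

namespace PathEnumeration

variable {n s : ℕ} {a : ℕ → ℤ} {F : Finset ℤ}

theorem lt_iff (ha : PathEnumeration n s a F) {i j : ℕ} (hi : i ≤ s + 1) (hj : j ≤ s + 1) :
    a i < a j ↔ i < j :=
  ha.strictMonoOn.lt_iff_lt (Set.mem_Iic.2 hi) (Set.mem_Iic.2 hj)

theorem le_iff (ha : PathEnumeration n s a F) {i j : ℕ} (hi : i ≤ s + 1) (hj : j ≤ s + 1) :
    a i ≤ a j ↔ i ≤ j :=
  ha.strictMonoOn.le_iff_le (Set.mem_Iic.2 hi) (Set.mem_Iic.2 hj)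

theorem mem_insert_neg_one_iff (ha : PathEnumeration n s a F) {b : ℤ} :
    b ∈ insert (-1 : ℤ) F ↔ ∃ i ≤ s, a i = b := by
  rw [Finset.mem_insert, ha.mem_iff]
  constructor
  · rintro (rfl | ⟨i, -, hi, rfl⟩)
    exacts [⟨0, Nat.zero_le _, ha.zero⟩, ⟨i, hi, rfl⟩]
  · rintro ⟨i, hi, rfl⟩
    rcases Nat.eq_zero_or_pos i with rfl | hi0
    exacts [Or.inl ha.zero, Or.inr ⟨i, hi0, hi, rfl⟩]

theorem mem_insert_last_iff (ha : PathEnumeration n s a F) {c : ℤ} :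
    c ∈ insert ((n : ℤ) + 2) F ↔ ∃ i, 1 ≤ i ∧ i ≤ s + 1 ∧ a i = c := by
  rw [Finset.mem_insert, ha.mem_iff]
  constructor
  · rintro (rfl | ⟨i, hi1, hi, rfl⟩)
    exacts [⟨s + 1, by omega, le_rfl, ha.last⟩, ⟨i, hi1, by omega, rfl⟩]
  · rintro ⟨i, hi1, hi, rfl⟩
    rcases (by omega : i = s + 1 ∨ i ≤ s) with rfl | his
    exacts [Or.inl ha.last, Or.inr ⟨i, hi1, his, rfl⟩]

theorem isPathGap_iff (ha : PathEnumeration n s a F) {b c : ℤ} :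
    IsPathGap n F b c ↔ ∃ i ≤ s, a i = b ∧ a (i + 1) = c := by
  constructor
  · rintro ⟨hb, hc, hbc, hmid⟩
    obtain ⟨i, hi, rfl⟩ := ha.mem_insert_neg_one_iff.1 hb
    obtain ⟨k, -, hk, rfl⟩ := ha.mem_insert_last_iff.1 hc
    have hik := (ha.lt_iff (by omega) hk).1 hbc
    refine ⟨i, hi, rfl, ?_⟩
    obtain rfl | hik' := (by omega : k = i + 1 ∨ i + 1 < k)
    · rfl
    · have hlt := (ha.lt_iff (by omega) (by omega)).2 (by omega : i < i + 1)
      have hlt' := (ha.lt_iff (by omega) hk).2 hik'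
      have := hmid _ ((ha.mem_iff _).2 ⟨i + 1, by omega, by omega, rfl⟩)
      omega
  · rintro ⟨i, hi, rfl, rfl⟩
    refine ⟨ha.mem_insert_neg_one_iff.2 ⟨i, hi, rfl⟩,
      ha.mem_insert_last_iff.2 ⟨i + 1, by omega, by omega, rfl⟩,
      (ha.lt_iff (by omega) (by omega)).2 (by omega), fun y hy => ?_⟩
    obtain ⟨m, -, hm, rfl⟩ := (ha.mem_iff y).1 hy
    rcases le_or_gt m i with h | h
    exacts [Or.inl ((ha.le_iff (by omega) (by omega)).2 h),
      Or.inr ((ha.le_iff (by omega) (by omega)).2 h)]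

theorem forall_isPathGap_sub_le_four_iff (ha : PathEnumeration n s a F) (hr : InVertexRange n F)
    (hind : PathIndep F) :
    (∀ b c, IsPathGap n F b c → c - b ≤ 4) ↔
      ∀ i ≤ s, a (i + 1) - a i = 2 ∨ a (i + 1) - a i = 3 ∨ a (i + 1) - a i = 4 := by
  constructor
  · intro h i hi
    have hgap := ha.isPathGap_iff.2 ⟨i, hi, rfl, rfl⟩
    have := h _ _ hgap
    have := hgap.two_le_sub hr hind
    omega
  · intro h b c hbc
    obtain ⟨i, hi, rfl, rfl⟩ := ha.isPathGap_iff.1 hbc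
    rcases h i hi with h | h | h <;> omega

theorem forall_four_lt_gap_pair_iff (ha : PathEnumeration n s a F) (hr : InVertexRange n F)
    (hind : PathIndep F) :
    (∀ x ∈ F, ∀ b c, IsPathGap n F b x → IsPathGap n F x c → 4 < c - b) ↔
      ∀ i, 1 ≤ i → i ≤ s → ¬ (a (i + 1) - a i = 2 ∧ a i - a (i - 1) = 2) := by
  constructor
  · rintro h i hi1 his ⟨h2, h2'⟩
    have hb := ha.isPathGap_iff.2 ⟨i - 1, by omega, rfl, by rw [Nat.sub_add_cancel hi1]⟩
    have := h (a i) ((ha.mem_iff _).2 ⟨i, hi1, his, rfl⟩) _ _ hb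
      (ha.isPathGap_iff.2 ⟨i, his, rfl, rfl⟩)
    omega
  · intro h x hx b c hb hc
    obtain ⟨j, hj, rfl, hjx⟩ := ha.isPathGap_iff.1 hb
    obtain ⟨k, hk, hkx, rfl⟩ := ha.isPathGap_iff.1 hc
    obtain rfl : k = j + 1 := ha.strictMonoOn.injOn (Set.mem_Iic.2 (by omega))
      (Set.mem_Iic.2 (by omega)) (hkx.trans hjx.symm)
    have h1 := (ha.isPathGap_iff.2 ⟨j, hj, rfl, rfl⟩).two_le_sub hr hind
    have h2 := hc.two_le_sub hr hind
    have := h (j + 1) (by omega) hk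
    simp only [Nat.add_sub_cancel] at this
    omega

end PathEnumeration

theorem stmt19_general (n s : ℕ) (a : ℕ → ℤ)
    (h0 : a 0 = -1) (hlast : a (s + 1) = (n : ℤ) + 2)
    (hmono : ∀ i j : ℕ, i < j → j ≤ s + 1 → a i < a j)
    (F : Finset ℤ)
    (hFmem : ∀ x : ℤ, x ∈ F ↔ ∃ i, 1 ≤ i ∧ i ≤ s ∧ a i = x)
    (hFsub : InVertexRange n F) (hFind : PathIndep F) :
    (IsPathFreeFace n F ∧ ∀ F' ⊆ F, IsPathFreeFace n F' → F' = F) ↔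
    ((∀ i ≤ s, a (i + 1) - a i = 2 ∨ a (i + 1) - a i = 3 ∨ a (i + 1) - a i = 4) ∧
      ∀ i, 1 ≤ i → i ≤ s → ¬ (a (i + 1) - a i = 2 ∧ a i - a (i - 1) = 2)) := by
  have ha : PathEnumeration n s a F :=
    ⟨h0, hlast, fun i _ j hj hij => hmono i j hij hj, hFmem⟩
  rw [isPathFreeFace_minimal_iff hFsub hFind, ha.forall_isPathGap_sub_le_four_iff hFsub hFind,
    ha.forall_four_lt_gap_pair_iff hFsub hFind]

/-- Let `F = {a_1 < ⋯ < a_s} ⊆ [n]` be an independent set of the path graph `P_n`, with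
the conventions `a_0 = -1`, `a_{s+1} = n+2`.  Then `F` is a free face of `Δ(P_n)` which is
minimal among the free faces contained in its unique containing facet iff `(a_1,…,a_s)` is
τ-permissible: all gaps `a_{i+1} - a_i` (for `0 ≤ i ≤ s`) lie in `{2,3,4}` and no index
`1 ≤ i ≤ s` has both neighbouring gaps equal to `2`. -/
theorem stmt19 (n s : ℕ) (hn : 2 ≤ n) (a : ℕ → ℤ)
    (h0 : a 0 = -1) (hlast : a (s + 1) = (n : ℤ) + 2)
    (hmono : ∀ i j : ℕ, i < j → j ≤ s + 1 → a i < a j)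
    (F : Finset ℤ)
    (hFmem : ∀ x : ℤ, x ∈ F ↔ ∃ i, 1 ≤ i ∧ i ≤ s ∧ a i = x)
    (hFsub : InVertexRange n F) (hFind : PathIndep F) :
    (IsPathFreeFace n F ∧ ∀ F' ⊆ F, IsPathFreeFace n F' → F' = F) ↔
    ((∀ i ≤ s, a (i + 1) - a i = 2 ∨ a (i + 1) - a i = 3 ∨ a (i + 1) - a i = 4) ∧
      ∀ i, 1 ≤ i → i ≤ s → ¬ (a (i + 1) - a i = 2 ∧ a i - a (i - 1) = 2)) :=
  stmt19_general n s a h0 hlast hmono F hFmem hFsub hFind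
end
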